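/- arXiv:1911.12594 — 11 statements merged into one kernel-verified Lean document; each statement's English description precedes it below -/
import Mathlib

section
/- Let G be a finite group such that every proper subgroup H of G not contained in the Frattini subgroup Φ(G) satisfies G = HK for some proper subgroup K of G. Then G is solvable. -/
/-!
Induction on `|G|`. If `Φ(G) ≠ 1`, the hypothesis passes to `G/Φ(G)` (a proper subgroup
stays proper modulo `Φ(G)` because `Φ(G)` is non-generating), and `Φ(G)` is nilpotent.
If `Φ(G) = 1` and `G` is not cyclic, take `x` of order `p`, the smallest prime divisor of `|G|`:
a proper supplement `K` of `⟨x⟩` has index at most `p`, hence exactly `p`, so `K` is normal with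
`G/K` cyclic; and `K` inherits the hypothesis, since with `Φ(G) = 1` every nontrivial subgroup
of `K` avoids `Φ(G)`.
-/

open scoped Pointwise

open Function Subgroup

namespace Subgroup

variable {G Q : Type*} [Group G] [Group Q] {H K L : Subgroup G}

theorem eq_top_of_mul_eq_univ_of_le (h : (H : Set G) * (L : Set G) = Set.univ) (hHL : H ≤ L) :
    L = ⊤ := by
  refine (L.eq_top_iff').mpr fun g => ?_
  obtain ⟨a, ha, b, hb, rfl⟩ : g ∈ (H : Set G) * L := h ▸ Set.mem_univ g
  exact L.mul_mem (hHL ha) hb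

theorem index_le_card_of_mul_eq_univ [Finite H] (h : (H : Set G) * (L : Set G) = Set.univ) :
    L.index ≤ Nat.card H := by
  rw [index_eq_card]
  refine Nat.card_le_card_of_surjective (fun a : H => (a : G ⧸ L)) fun q => ?_
  obtain ⟨g, rfl⟩ := QuotientGroup.mk_surjective q
  obtain ⟨a, ha, b, hb, rfl⟩ : g ∈ (H : Set G) * L := h ▸ Set.mem_univ g
  exact ⟨⟨a, ha⟩, (QuotientGroup.mk_mul_of_mem a hb).symm⟩

theorem index_eq_minFac_of_mul_eq_univ [Finite G] (hL : L ≠ ⊤)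
    (h : (H : Set G) * (L : Set G) = Set.univ) (hH : Nat.card H = (Nat.card G).minFac) :
    L.index = (Nat.card G).minFac := by
  refine le_antisymm (hH ▸ index_le_card_of_mul_eq_univ h)
    (Nat.minFac_le_of_dvd ?_ L.index_dvd_card)
  have := L.index_ne_zero_of_finite
  have := mt index_eq_one.mp hL
  omega

theorem mul_subgroupOf_eq_univ (hHK : H ≤ K) (h : (H : Set G) * (L : Set G) = Set.univ) :
    (H.subgroupOf K : Set K) * (L.subgroupOf K : Set K) = Set.univ := by
  refine Set.eq_univ_of_forall fun ⟨g, hg⟩ => ?_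
  obtain ⟨a, ha, b, hb, rfl⟩ : g ∈ (H : Set G) * L := h ▸ Set.mem_univ g
  have hbK : b ∈ K := by simpa using K.mul_mem (K.inv_mem (hHK ha)) hg
  exact ⟨⟨a, hHK ha⟩, ha, ⟨b, hbK⟩, hb, rfl⟩

theorem map_mul_eq_univ {f : G →* Q} (hf : Surjective f)
    (h : (H : Set G) * (L : Set G) = Set.univ) :
    (H.map f : Set Q) * (L.map f : Set Q) = Set.univ := by
  rw [coe_map, coe_map, ← Set.image_mul, h, Set.image_univ, hf.range_eq]

theorem map_ne_top_of_ker_le_frattini [IsCoatomic (Subgroup G)] {f : G →* Q}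
    (hf : f.ker ≤ frattini G) (hL : L ≠ ⊤) : L.map f ≠ ⊤ := by
  refine fun htop => hL (frattini_nongenerating (top_le_iff.mp ?_))
  rw [← comap_top f, ← htop, comap_map_eq]
  exact sup_le_sup_left hf L

theorem comap_not_le_frattini {f : G →* Q} (hf : Surjective f) {H' : Subgroup Q}
    (h : ¬H' ≤ frattini Q) : ¬H'.comap f ≤ frattini G := fun hle => h <|
  calc H' = (H'.comap f).map f := (map_comap_eq_self_of_surjective hf H').symm
    _ ≤ (frattini G).map f := map_mono hle
    _ ≤ frattini Q := map_le_iff_le_comap.mpr (frattini_le_comap_frattini_of_surjective hf)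

end Subgroup

def HasProperSupplementsOffFrattini (G : Type*) [Group G] : Prop :=
  ∀ H : Subgroup G, H ≠ ⊤ → ¬H ≤ frattini G →
    ∃ K : Subgroup G, K ≠ ⊤ ∧ (H : Set G) * (K : Set G) = Set.univ

namespace HasProperSupplementsOffFrattini

variable {G Q : Type*} [Group G] [Group Q]

theorem of_surjective [IsCoatomic (Subgroup G)] (hG : HasProperSupplementsOffFrattini G)
    {f : G →* Q} (hf : Surjective f) (hker : f.ker ≤ frattini G) :
    HasProperSupplementsOffFrattini Q := by
  intro H' hH' hH'Φ
  have hH : H'.comap f ≠ ⊤ := fun htop => hH' <| by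
    rw [← map_comap_eq_self_of_surjective hf H', htop, map_top_of_surjective f hf]
  obtain ⟨L, hL, hHL⟩ := hG _ hH (comap_not_le_frattini hf hH'Φ)
  refine ⟨L.map f, map_ne_top_of_ker_le_frattini hker hL, ?_⟩
  simpa only [map_comap_eq_self_of_surjective hf] using map_mul_eq_univ hf hHL

theorem subgroup (hG : HasProperSupplementsOffFrattini G) (hΦ : frattini G = ⊥)
    (K : Subgroup G) : HasProperSupplementsOffFrattini K := by
  intro H' hH' hH'Φ
  set H := H'.map K.subtype
  have hHK : H ≤ K := map_subtype_le H'
  have hHH' : H.subgroupOf K = H' := by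
    rw [← comap_subtype, comap_map_eq_self_of_injective K.subtype_injective]
  have hH : H ≠ ⊤ := fun htop => hH' (by rw [← hHH', htop, top_subgroupOf])
  have hHΦ : ¬H ≤ frattini G := by
    rw [hΦ, le_bot_iff, map_eq_bot_iff_of_injective _ K.subtype_injective]
    exact fun h => hH'Φ (h ▸ bot_le)
  obtain ⟨L, hL, hHL⟩ := hG H hH hHΦ
  refine ⟨L.subgroupOf K, fun htop => hL ?_, hHH' ▸ mul_subgroupOf_eq_univ hHK hHL⟩
  exact eq_top_of_mul_eq_univ_of_le hHL (hHK.trans (subgroupOf_eq_top.mp htop))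

theorem exists_normal_prime_index_of_not_isCyclic [Finite G]
    (hG : HasProperSupplementsOffFrattini G) (hΦ : frattini G = ⊥) (hcyc : ¬IsCyclic G) :
    ∃ K : Subgroup G, K.Normal ∧ K.index.Prime := by
  have hp : (Nat.card G).minFac.Prime := Nat.minFac_prime fun h => hcyc <| by
    have := (Nat.card_eq_one_iff_unique.mp h).1
    infer_instance
  have := Fact.mk hp
  obtain ⟨x, hx⟩ := exists_prime_orderOf_dvd_card' _ (Nat.minFac_dvd (Nat.card G))
  have hxtop : zpowers x ≠ ⊤ := fun h =>
    hcyc (isCyclic_iff_exists_zpowers_eq_top.mpr ⟨x, h⟩)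
  have hxΦ : ¬zpowers x ≤ frattini G := by
    rw [hΦ, le_bot_iff, zpowers_eq_bot]
    rintro rfl
    exact hp.one_lt.ne (orderOf_one (G := G) ▸ hx)
  obtain ⟨K, hK, hxK⟩ := hG _ hxtop hxΦ
  have hKindex := index_eq_minFac_of_mul_eq_univ hK hxK (by rw [Nat.card_zpowers, hx])
  exact ⟨K, normal_of_index_eq_minFac_card hKindex, hKindex ▸ hp⟩

theorem isSolvable [Finite G] (hG : HasProperSupplementsOffFrattini G) : Group.IsSolvable G := by
  induction hn : Nat.card G using Nat.strong_induction_on generalizing G with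
  | _ n ih =>
  subst hn
  by_cases hΦ : frattini G = ⊥
  · by_cases hcyc : IsCyclic G
    · exact Group.isSolvable_of_comm mul_comm'
    obtain ⟨K, hKn, hK⟩ := hG.exists_normal_prime_index_of_not_isCyclic hΦ hcyc
    have := Fact.mk hK
    have hKcard : Nat.card K < Nat.card G := by
      rw [← K.card_mul_index]
      exact lt_mul_of_one_lt_right Nat.card_pos hK.one_lt
    have : IsCyclic (G ⧸ K) := isCyclic_of_prime_card (index_eq_card K).symm
    exact (Group.isSolvable_iff_subgroup_quotient K).mpr
      ⟨ih _ hKcard (hG.subgroup hΦ K) rfl, Group.isSolvable_of_comm mul_comm'⟩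
  · have hcard : Nat.card (G ⧸ frattini G) < Nat.card G := by
      rw [card_eq_card_quotient_mul_card_subgroup (frattini G)]
      exact lt_mul_of_one_lt_right Nat.card_pos ((one_lt_card_iff_ne_bot _).mpr hΦ)
    have hker : (QuotientGroup.mk' (frattini G)).ker ≤ frattini G :=
      (QuotientGroup.ker_mk' _).le
    have := frattini_nilpotent (G := G)
    exact (Group.isSolvable_iff_subgroup_quotient (frattini G)).mpr
      ⟨inferInstance, ih _ hcard (hG.of_surjective (QuotientGroup.mk'_surjective _) hker) rfl⟩

end HasProperSupplementsOffFrattini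

theorem solvable_of_factorizes_on_nonfrattini_subgroups
    (G : Type*) [Group G] [Finite G]
    (h : ∀ H : Subgroup G, H ≠ ⊤ → ¬ H ≤ frattini G →
      ∃ K : Subgroup G, K ≠ ⊤ ∧ (H : Set G) * (K : Set G) = Set.univ) :
    IsSolvable G :=
  HasProperSupplementsOffFrattini.isSolvable h
end

section
/- Let G be a finite group with |G/Φ(G)| = p₁⋯pₙ a product of primes p₁ ≤ ⋯ ≤ pₙ. Suppose M₁,…,Mₙ are maximal subgroups of G with [G : Mᵢ] = pᵢ for each i and M₁ ∩ ⋯ ∩ Mₙ = Φ(G). Then for every permutation π of {1,…,n} and every 1 ≤ i < n, the index [M_{π(1)} ∩ ⋯ ∩ M_{π(i)} : M_{π(1)} ∩ ⋯ ∩ M_{π(i)} ∩ M_{π(i+1)}] equals p_{π(i+1)}. -/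
/-!
Listing the `Mᵢ` in the order `π`, the index of `Φ(G) = ⋂ Mᵢ` telescopes into the product of the
successive relative indices `[M_{π(1)} ∩ ⋯ ∩ M_{π(i)} : M_{π(1)} ∩ ⋯ ∩ M_{π(i+1)}]`. Each factor is
at most `[G : M_{π(i+1)}] = p_{π(i+1)}`, while the product equals `|G/Φ(G)| = ∏ pᵢ`; since all factors
are positive, every inequality must be an equality.
-/

namespace Finset

variable {ι R : Type*} [CommMonoidWithZero R] [PartialOrder R] [ZeroLEOneClass R]
  [PosMulStrictMono R] [Nontrivial R]

theorem eq_of_prod_eq_prod_of_le {s : Finset ι} {f g : ι → R} (hf : ∀ i ∈ s, 0 < f i)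
    (hfg : ∀ i ∈ s, f i ≤ g i) (h : ∏ i ∈ s, f i = ∏ i ∈ s, g i) : ∀ i ∈ s, f i = g i := by
  by_contra! hne
  obtain ⟨i, hi, hfgi⟩ := hne
  exact (prod_lt_prod hf hfg ⟨i, hi, (hfg i hi).lt_of_ne hfgi⟩).ne h

end Finset

namespace Subgroup

variable {G : Type*} [Group G]

theorem relIndex_le_index (H K : Subgroup G) [H.FiniteIndex] : H.relIndex K ≤ H.index := by
  simpa only [relIndex_top_right] using
    relIndex_le_of_le_right le_top (H.relIndex_top_right ▸ FiniteIndex.index_ne_zero)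

theorem index_biInf_eq_prod_relIndex {ι : Type*} [LinearOrder ι] (H : ι → Subgroup G)
    (s : Finset ι) :
    (⨅ i ∈ s, H i).index = ∏ i ∈ s, (H i).relIndex (⨅ k ∈ s, ⨅ _ : k < i, H k) := by
  induction s using Finset.induction_on_max with
  | empty => simp
  | insert a s hlt ih =>
    have ha_notMem : a ∉ s := fun h => lt_irrefl a (hlt a h)
    have h_before_a : ⨅ k ∈ insert a s, ⨅ _ : k < a, H k = ⨅ k ∈ s, H k := by
      rw [Finset.iInf_insert, iInf_neg (lt_irrefl a), top_inf_eq]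
      exact iInf_congr fun k => iInf_congr fun hk => iInf_pos (hlt k hk)
    have h_before_old : ∀ i ∈ s,
        ⨅ k ∈ insert a s, ⨅ _ : k < i, H k = ⨅ k ∈ s, ⨅ _ : k < i, H k := fun i hi => by
      rw [Finset.iInf_insert, iInf_neg (hlt i hi).not_gt, top_inf_eq]
    rw [Finset.prod_insert ha_notMem, h_before_a,
      Finset.prod_congr rfl fun i hi => by rw [h_before_old i hi], ← ih, Finset.iInf_insert,
      ← relIndex_mul_index inf_le_right, inf_relIndex_right]

theorem index_iInf_eq_prod_relIndex {ι : Type*} [LinearOrder ι] [Fintype ι]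
    (H : ι → Subgroup G) :
    (⨅ i, H i).index = ∏ i, (H i).relIndex (⨅ k, ⨅ _ : k < i, H k) := by
  simpa only [Finset.mem_univ, iInf_true] using index_biInf_eq_prod_relIndex H Finset.univ

end Subgroup

theorem relindex_of_maximal_subgroups_meeting_in_frattini_general
    (G : Type*) [Group G] [Finite G] (n : ℕ) (p : Fin n → ℕ)
    (hcard : Nat.card (G ⧸ frattini G) = ∏ i, p i)
    (M : Fin n → Subgroup G)
    (hindex : ∀ i, (M i).index = p i)
    (hinf : (⨅ i, M i) = frattini G) :
    ∀ π : Equiv.Perm (Fin n), ∀ i : Fin n, 0 < (i : ℕ) →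
      (M (π i)).relIndex (⨅ k : Fin n, ⨅ _ : k < i, M (π k)) = p (π i) := by
  intro π i _
  have h_telescope : ∏ j, (M (π j)).relIndex (⨅ k, ⨅ _ : k < j, M (π k)) = ∏ j, p (π j) := by
    rw [← Subgroup.index_iInf_eq_prod_relIndex, Equiv.iInf_comp (g := M), hinf,
      Equiv.prod_comp π p, ← hcard, Subgroup.index]
  have h_pos : ∀ j ∈ Finset.univ, 0 < (M (π j)).relIndex (⨅ k, ⨅ _ : k < j, M (π k)) :=
    fun _ _ => Nat.pos_of_ne_zero Subgroup.index_ne_zero_of_finite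
  have h_le : ∀ j ∈ Finset.univ, (M (π j)).relIndex (⨅ k, ⨅ _ : k < j, M (π k)) ≤ p (π j) :=
    fun j _ => hindex (π j) ▸ Subgroup.relIndex_le_index _ _
  exact Finset.eq_of_prod_eq_prod_of_le h_pos h_le h_telescope i (Finset.mem_univ i)

theorem relindex_of_maximal_subgroups_meeting_in_frattini
    (G : Type*) [Group G] [Finite G] (n : ℕ) (p : Fin n → ℕ)
    (hprime : ∀ i, (p i).Prime) (hmono : Monotone p)
    (hcard : Nat.card (G ⧸ frattini G) = ∏ i, p i)
    (M : Fin n → Subgroup G)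
    (hmax : ∀ i, IsCoatom (M i)) (hindex : ∀ i, (M i).index = p i)
    (hinf : (⨅ i, M i) = frattini G) :
    ∀ π : Equiv.Perm (Fin n), ∀ i : Fin n, 0 < (i : ℕ) →
      (M (π i)).relIndex (⨅ k : Fin n, ⨅ _ : k < i, M (π k)) = p (π i) :=
  relindex_of_maximal_subgroups_meeting_in_frattini_general G n p hcard M hindex hinf
end

section
/- Let G be a finite group and suppose Φ(G) is the intersection of maximal subgroups M₁,…,Mₘ whose indices in G are p₁ ≤ ⋯ ≤ pₘ, the prime divisors (with multiplicity) of |G/Φ(G)|. Then every proper subgroup H of G not contained in Φ(G) satisfies G = H·Mᵢ for some i ∈ {1,…,m}. -/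
open scoped Pointwise

/-
Let L be the intersection of the Mᵢ containing H. The index bounds [G : L] ≤ ∏_{H ≤ Mᵢ} pᵢ and
[G : ⋂_{H ≰ Mᵢ} Mᵢ] ≤ ∏_{H ≰ Mᵢ} pᵢ must both be equalities, since the product of the two indices
is at least [G : Φ(G)] = ∏ pᵢ; hence [L : Φ(G)] = ∏_{H ≰ Mᵢ} pᵢ. Choose k with H ≰ Mₖ and pₖ
minimal. As Φ(G) ≤ Mₖ is normal, [H : H ∩ Mₖ] divides [HΦ(G) : Φ(G)], which divides [L : Φ(G)].
A divisor ≠ 1 of that product of primes is at least pₖ, while [H : H ∩ Mₖ] ≤ [G : Mₖ] = pₖ.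
So H acts transitively on the pₖ cosets of Mₖ, i.e. H·Mₖ = G.
-/

theorem Nat.le_of_dvd_prod_primes {ι : Type*} {s : Finset ι} {p : ι → ℕ}
    (hp : ∀ i ∈ s, (p i).Prime) {q r : ℕ} (hq : ∀ i ∈ s, q ≤ p i)
    (hr : r ∣ ∏ i ∈ s, p i) (hr1 : r ≠ 1) : q ≤ r := by
  have hr0 : r ≠ 0 := by
    rintro rfl
    exact Finset.prod_ne_zero_iff.2 (fun i hi => (hp i hi).ne_zero) (zero_dvd_iff.1 hr)
  obtain ⟨ℓ, hℓ, hℓr⟩ := Nat.exists_prime_and_dvd hr1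
  obtain ⟨i, hi, hℓi⟩ := hℓ.prime.exists_mem_finset_dvd (hℓr.trans hr)
  calc q ≤ p i := hq i hi
    _ = ℓ := ((Nat.prime_dvd_prime_iff_eq hℓ (hp i hi)).1 hℓi).symm
    _ ≤ r := Nat.le_of_dvd (Nat.pos_of_ne_zero hr0) hℓr

namespace Subgroup

variable {G : Type*} [Group G]

theorem mul_eq_univ_of_relIndex_eq_index {H K : Subgroup G} (hK : K.index ≠ 0)
    (h : K.relIndex H = K.index) : (H : Set G) * (K : Set G) = Set.univ := by
  have hcard_top : Nat.card ((⊤ : Subgroup G) ⧸ K.subgroupOf ⊤) = K.index :=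
    relIndex_top_right K
  have : Finite ((⊤ : Subgroup G) ⧸ K.subgroupOf ⊤) :=
    Nat.finite_of_card_ne_zero (hcard_top ▸ hK)
  -- `H ⧸ (H ⊓ K) ↪ G ⧸ K` is a bijection, as both sides have `K.index` elements.
  have hsurj := ((quotientSubgroupOfEmbeddingOfLE K (le_top : H ≤ ⊤)).injective
    |>.bijective_of_nat_card_le (hcard_top.trans h.symm).le).2
  refine Set.eq_univ_of_forall fun g => ?_
  obtain ⟨x, hx⟩ := hsurj (QuotientGroup.mk ⟨g, trivial⟩)
  induction x using QuotientGroup.induction_on with | H a => ?_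
  rw [quotientSubgroupOfEmbeddingOfLE_apply_mk, QuotientGroup.eq, mem_subgroupOf] at hx
  exact ⟨a, a.2, a⁻¹ * g, hx, mul_inv_cancel_left _ _⟩

theorem relIndex_dvd_relIndex_of_le {N H K : Subgroup G} [N.Normal] (hHK : H ≤ K) :
    N.relIndex H ∣ N.relIndex K := by
  rw [← relIndex_sup_right H N, ← relIndex_sup_right K N]
  exact Dvd.intro _ (relIndex_mul_relIndex N _ _ le_sup_right (sup_le_sup_right hHK N))

theorem index_biInf_le {ι : Type*} (M : ι → Subgroup G) (s : Finset ι) :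
    (⨅ i ∈ s, M i).index ≤ ∏ i ∈ s, (M i).index := by
  rw [iInf_subtype', ← Finset.prod_coe_sort]
  exact index_iInf_le _

section

variable {ι : Type*} [Fintype ι] [DecidableEq ι] {M : ι → Subgroup G}

theorem index_biInf_eq_prod_of_index_iInf_eq_prod (hM : ∀ i, (M i).index ≠ 0)
    (h : (⨅ i, M i).index = ∏ i, (M i).index) (s : Finset ι) :
    (⨅ i ∈ s, M i).index = ∏ i ∈ s, (M i).index := by
  have hsplit : (⨅ i, M i) = (⨅ i ∈ s, M i) ⊓ ⨅ i ∈ sᶜ, M i := by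
    simp only [iInf_split M (· ∈ s), Finset.mem_compl]
  have hle := index_biInf_le M s
  have hle' := index_biInf_le M sᶜ
  have hpos : 0 < ∏ i ∈ sᶜ, (M i).index :=
    Finset.prod_pos fun i _ => Nat.pos_of_ne_zero (hM i)
  have hge : (∏ i ∈ s, (M i).index) * ∏ i ∈ sᶜ, (M i).index ≤
      (⨅ i ∈ s, M i).index * (⨅ i ∈ sᶜ, M i).index := by
    rw [Finset.prod_mul_prod_compl, ← h, hsplit]
    exact index_inf_le
  refine hle.antisymm (not_lt.1 fun hlt => hge.not_gt ?_)
  exact Nat.mul_lt_mul_of_lt_of_le hlt hle' hpos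

theorem relIndex_iInf_biInf_eq_prod_compl (hM : ∀ i, (M i).index ≠ 0)
    (h : (⨅ i, M i).index = ∏ i, (M i).index) (s : Finset ι) :
    (⨅ i, M i).relIndex (⨅ i ∈ s, M i) = ∏ i ∈ sᶜ, (M i).index := by
  have htower := relIndex_mul_index (H := ⨅ i, M i) (K := ⨅ i ∈ s, M i)
    (le_iInf₂ fun i _ => iInf_le M i)
  rw [h, index_biInf_eq_prod_of_index_iInf_eq_prod hM h s,
    ← Finset.prod_mul_prod_compl s] at htower
  exact Nat.eq_of_mul_eq_mul_right
    (Finset.prod_pos fun i _ => Nat.pos_of_ne_zero (hM i)) (htower.trans (mul_comm _ _))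

end

end Subgroup

open Subgroup in
theorem factorizes_with_some_maximal_of_frattini_intersection_general
    (G : Type*) [Group G] (m : ℕ) (p : Fin m → ℕ)
    (hprime : ∀ i, (p i).Prime)
    (hcard : Nat.card (G ⧸ frattini G) = ∏ i, p i)
    (M : Fin m → Subgroup G)
    (hindex : ∀ i, (M i).index = p i)
    (hinf : (⨅ i, M i) = frattini G) :
    ∀ H : Subgroup G, H ≠ ⊤ → ¬ H ≤ frattini G →
      ∃ i : Fin m, (H : Set G) * (M i : Set G) = Set.univ := by
  classical
  intro H _ hHΦ
  have hindex_ne : ∀ i, (M i).index ≠ 0 := fun i => hindex i ▸ (hprime i).ne_zero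
  set T := Finset.univ.filter fun i => H ≤ M i
  have hTc : Tᶜ.Nonempty := by
    contrapose! hHΦ
    exact hinf ▸ le_iInf fun i => by simpa [T] using Finset.eq_empty_iff_forall_notMem.1 hHΦ i
  obtain ⟨k, hkT, hk_min⟩ := Tᶜ.exists_min_image p hTc
  have hHk : ¬ H ≤ M k := by simpa [T] using hkT
  have hrel : (frattini G).relIndex (⨅ i ∈ T, M i) = ∏ i ∈ Tᶜ, p i := by
    have hΦ : (⨅ i, M i).index = ∏ i, (M i).index := by
      simp only [hinf, hindex, index_eq_card, hcard]
    simp only [← hinf, relIndex_iInf_biInf_eq_prod_compl hindex_ne hΦ, hindex]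
  have hdvd : (M k).relIndex H ∣ ∏ i ∈ Tᶜ, p i :=
    hrel ▸ (relIndex_dvd_of_le_left H (hinf ▸ iInf_le M k)).trans
      (relIndex_dvd_relIndex_of_le (le_iInf₂ fun i hi => (Finset.mem_filter.1 hi).2))
  have hle : (M k).relIndex H ≤ p k := by
    rw [← hindex k, ← relIndex_top_right]
    exact relIndex_le_of_le_right le_top ((relIndex_top_right (M k)).symm ▸ hindex_ne k)
  have hge : p k ≤ (M k).relIndex H :=
    Nat.le_of_dvd_prod_primes (fun i _ => hprime i) hk_min hdvd (mt relIndex_eq_one.1 hHk)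
  refine ⟨k, mul_eq_univ_of_relIndex_eq_index (hindex_ne k) ?_⟩
  rw [hindex]
  exact hle.antisymm hge

theorem factorizes_with_some_maximal_of_frattini_intersection
    (G : Type*) [Group G] [Finite G] (m : ℕ) (p : Fin m → ℕ)
    (hprime : ∀ i, (p i).Prime) (hmono : Monotone p)
    (hcard : Nat.card (G ⧸ frattini G) = ∏ i, p i)
    (M : Fin m → Subgroup G)
    (hmax : ∀ i, IsCoatom (M i)) (hindex : ∀ i, (M i).index = p i)
    (hinf : (⨅ i, M i) = frattini G) :
    ∀ H : Subgroup G, H ≠ ⊤ → ¬ H ≤ frattini G →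
      ∃ i : Fin m, (H : Set G) * (M i : Set G) = Set.univ :=
  factorizes_with_some_maximal_of_frattini_intersection_general G m p hprime hcard M hindex hinf
end

section
/- Let G be a finite group with the property that for every proper subgroup H ⊄ Φ(G) there is a proper subgroup K with G = HK. Then G possesses a maximal subgroup M with [G : M] = p, where p is the smallest prime divisor of |G/Φ(G)|, and this M is normal in G. -/
/-!
By Cauchy's theorem in `G ⧸ Φ(G)` there is `H ≥ Φ(G)` with `[H : Φ(G)] = p`. If `H = G`, then
`Φ(G)` itself has prime index `p`. Otherwise the hypothesis gives a proper `K` with `HK = G`;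
a maximal `M ⊇ K` then has `HM = G` and `Φ(G) ≤ M`, so `[G : M] = [H : H ∩ M]` divides `[H : Φ(G)] = p`. Finally `M / Φ(G)` has index
the smallest prime factor of `|G / Φ(G)|`, hence is normal.
-/
open scoped Pointwise

namespace Subgroup
variable {G : Type*} [Group G]

theorem isCoatom_of_index_prime {M : Subgroup G} (hM : M.index.Prime) : IsCoatom M := by
  have : M.FiniteIndex := ⟨hM.ne_zero⟩
  refine ⟨fun h => hM.ne_one (index_eq_one.mpr h), fun K hMK => index_eq_one.mp ?_⟩
  exact (hM.eq_one_or_self_of_dvd _ (index_dvd_of_le hMK.le)).resolve_right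
    (index_strictAnti hMK).ne

theorem relIndex_eq_index_of_mul_eq_univ {H M : Subgroup G}
    (hHM : (H : Set G) * (M : Set G) = Set.univ) : M.relIndex H = M.index := by
  have hsmul (h : H) : h • ((1 : G) : G ⧸ M) = ((h : G) : G ⧸ M) := congrArg _ (mul_one _)
  have hstab : MulAction.stabilizer H ((1 : G) : G ⧸ M) = M.subgroupOf H := by
    ext h
    rw [MulAction.mem_stabilizer_iff, hsmul, mem_subgroupOf, QuotientGroup.eq, mul_one,
      inv_mem_iff]
  have horbit : MulAction.orbit H ((1 : G) : G ⧸ M) = Set.univ := by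
    refine Set.eq_univ_of_forall (QuotientGroup.mk_surjective.forall.mpr fun g => ?_)
    obtain ⟨h, hh, m, hm, rfl⟩ : g ∈ (H : Set G) * (M : Set G) := hHM ▸ Set.mem_univ g
    exact ⟨⟨h, hh⟩, (hsmul _).trans (QuotientGroup.eq.mpr (by simpa using hm))⟩
  rw [relIndex, ← hstab, MulAction.index_stabilizer, horbit, Set.ncard_univ, index]

theorem index_eq_of_mul_eq_univ_of_relIndex_prime {N H M : Subgroup G} {p : ℕ} (hp : p.Prime)
    (hNH : N.relIndex H = p) (hNM : N ≤ M) (hM : M ≠ ⊤)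
    (hHM : (H : Set G) * (M : Set G) = Set.univ) : M.index = p := by
  have hdvd : M.index ∣ p :=
    relIndex_eq_index_of_mul_eq_univ hHM ▸ hNH ▸ relIndex_dvd_of_le_left H hNM
  exact (hp.eq_one_or_self_of_dvd _ hdvd).resolve_left (mt index_eq_one.mp hM)

theorem exists_le_relIndex_eq_prime (N : Subgroup G) [N.Normal] [Finite (G ⧸ N)] {p : ℕ}
    [Fact p.Prime] (hp : p ∣ Nat.card (G ⧸ N)) : ∃ H : Subgroup G, N ≤ H ∧ N.relIndex H = p := by
  obtain ⟨x, hx⟩ := exists_prime_orderOf_dvd_card' p hp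
  refine ⟨(zpowers x).comap (QuotientGroup.mk' N), ?_, ?_⟩
  · simpa using ker_le_comap (QuotientGroup.mk' N) (zpowers x)
  · calc N.relIndex ((zpowers x).comap (QuotientGroup.mk' N))
        = ((⊥ : Subgroup (G ⧸ N)).comap (QuotientGroup.mk' N)).relIndex
            ((zpowers x).comap (QuotientGroup.mk' N)) := by
          rw [MonoidHom.comap_bot, QuotientGroup.ker_mk']
      _ = p := by
          rw [relIndex_comap, map_comap_eq_self_of_surjective (QuotientGroup.mk'_surjective N),
            relIndex_bot_left, Nat.card_zpowers, hx]

theorem normal_of_index_eq_minFac_card_quotient {N M : Subgroup G} [N.Normal] (hNM : N ≤ M)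
    (hM : M.index = (Nat.card (G ⧸ N)).minFac) : M.Normal := by
  have hker : (QuotientGroup.mk' N).ker ≤ M := (QuotientGroup.ker_mk' N).symm ▸ hNM
  have hmap : (M.map (QuotientGroup.mk' N)).Normal := normal_of_index_eq_minFac_card
    (M.index_map_eq (QuotientGroup.mk'_surjective N) hker ▸ hM)
  exact comap_map_eq_self hker ▸ hmap.comap (QuotientGroup.mk' N)

end Subgroup

open Subgroup in
theorem exists_normal_maximal_of_smallest_prime_index
    (G : Type*) [Group G] [Finite G] (p : ℕ) (hp : p.Prime)
    (hpdvd : p ∣ Nat.card (G ⧸ frattini G))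
    (hmin : ∀ q : ℕ, q.Prime → q ∣ Nat.card (G ⧸ frattini G) → p ≤ q)
    (h : ∀ H : Subgroup G, H ≠ ⊤ → ¬ H ≤ frattini G →
      ∃ K : Subgroup G, K ≠ ⊤ ∧ (H : Set G) * (K : Set G) = Set.univ) :
    ∃ M : Subgroup G, IsCoatom M ∧ M.index = p ∧ M.Normal := by
  have : Fact p.Prime := ⟨hp⟩
  have hp_minFac : p = (Nat.card (G ⧸ frattini G)).minFac :=
    le_antisymm (hmin _ (Nat.minFac_prime fun h1 => hp.ne_one (Nat.dvd_one.mp (h1 ▸ hpdvd)))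
      (Nat.minFac_dvd _)) (Nat.minFac_le_of_dvd hp.two_le hpdvd)
  obtain ⟨H, hΦH, hHp⟩ := exists_le_relIndex_eq_prime (frattini G) hpdvd
  by_cases hH : H = ⊤
  · have hΦp : (frattini G).index = p := by rwa [hH, relIndex_top_right] at hHp
    exact ⟨frattini G, isCoatom_of_index_prime (hΦp ▸ hp), hΦp, inferInstance⟩
  have hHΦ : ¬ H ≤ frattini G := fun hle => hp.ne_one <| by
    rw [← hHp, le_antisymm hle hΦH, relIndex_self]
  obtain ⟨K, hK, hHK⟩ := h H hH hHΦ
  obtain ⟨M, hM, hKM⟩ := (IsCoatomic.eq_top_or_exists_le_coatom K).resolve_left hK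
  have hHM : (H : Set G) * (M : Set G) = Set.univ :=
    Set.eq_univ_of_univ_subset (hHK ▸ Set.mul_subset_mul_left (SetLike.coe_subset_coe.mpr hKM))
  have hMp := index_eq_of_mul_eq_univ_of_relIndex_prime hp hHp (frattini_le_coatom hM) hM.1 hHM
  exact ⟨M, hM, hMp, normal_of_index_eq_minFac_card_quotient (frattini_le_coatom hM)
    (hMp.trans hp_minFac)⟩
end

section
/- Let G = ⟨x,y : x^{p^m} = y^{q^n} = 1, x^y = x^λ⟩ where p, q are distinct primes, m, n ≥ 1, and λ has multiplicative order q modulo p^m. Then every proper subgroup of G not contained in Φ(G) is either of the form ⟨x^{p^i}⟩ ⋊ ⟨y⟩^{x^j} (for suitable i, j) or of the form ⟨x⟩ ⋊ ⟨y^{q^k}⟩ (for suitable k ≥ 1), and any subgroup of the first form together with any subgroup of the second form have product equal to G. -/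
/-!
`X = ⟨x⟩` is normal and `G = X⟨y⟩`; `y ^ q` is central, and since `⟨x ^ p⟩` and `⟨y ^ q⟩` are
normal cyclic subgroups of prime power order, `x ^ p` and `y ^ q` lie in `Φ(G)`.
For a subgroup `H`, `H ⊓ X = ⟨x ^ p ^ i⟩`.
* If `x ∈ H`, Dedekind's law gives `H = X ⊔ (H ⊓ ⟨y⟩) = X ⊔ ⟨y ^ q ^ k⟩`.
* If `H` contains some `x ^ a * y ^ b` with `q ∤ b`, a power of it is `y * x ^ c`.
  As `λ ≢ 1 (mod p)` (otherwise `λ ^ p ^ (m - 1) ≡ 1 (mod p ^ m)`), `1 - λ` is a unit mod `p ^ m`,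
  so `y * x ^ c` is a conjugate `y ^ (x ^ j)`, and Dedekind's law gives
  `H = ⟨x ^ p ^ i⟩ ⊔ ⟨y ^ (x ^ j)⟩`.
* Otherwise `H ≤ X ⊔ ⟨y ^ q⟩` and `x ∉ H`; raising to the power `q ^ n` shows
  `H ≤ ⟨x ^ p⟩ ⊔ ⟨y ^ q⟩ ≤ Φ(G)`.
A subgroup containing some `y ^ (x ^ j)` times one containing `x` is all of `G`, because
`⟨y ^ (x ^ j)⟩ X = G`.
-/

open scoped Pointwise
open Subgroup

section Cyclic

variable {G : Type*} [Group G]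

theorem zpowers_pow_gcd_orderOf (g : G) (n : ℕ) :
    zpowers (g ^ n.gcd (orderOf g)) = zpowers (g ^ n) := by
  refine le_antisymm (zpowers_le.mpr (mem_zpowers_iff.mpr ⟨n.gcdA (orderOf g), ?_⟩)) ?_
  · rw [← zpow_natCast g (n.gcd _), Nat.gcd_eq_gcd_ab, zpow_add, zpow_mul, zpow_mul,
      zpow_natCast, zpow_natCast, pow_orderOf_eq_one, one_zpow, mul_one]
  · obtain ⟨c, hc⟩ := Nat.gcd_dvd_left n (orderOf g)
    exact zpowers_le.mpr (mem_zpowers_iff.mpr ⟨c, by rw [zpow_natCast, ← pow_mul, ← hc]⟩)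

theorem exists_eq_zpowers_pow_prime_pow {g : G} {ρ e : ℕ} (hρ : ρ.Prime)
    (hg : orderOf g = ρ ^ e) {K : Subgroup G} (hK : K ≤ zpowers g) :
    ∃ i, K = zpowers (g ^ ρ ^ i) := by
  obtain ⟨n, rfl⟩ := (le_zpowers_iff g K).mp hK
  obtain ⟨i, -, hi⟩ := (Nat.dvd_prime_pow hρ).mp (hg ▸ Nat.gcd_dvd_right n (orderOf g))
  exact ⟨i, by rw [← hi, ← hg, zpowers_pow_gcd_orderOf]⟩

theorem normal_zpowers_pow {x : G} [hx : (zpowers x).Normal] (k : ℕ) :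
    (zpowers (x ^ k)).Normal where
  conj_mem n hn g := by
    obtain ⟨s, rfl⟩ := mem_zpowers_iff.mp hn
    obtain ⟨t, ht⟩ := mem_zpowers_iff.mp (hx.conj_mem x (mem_zpowers x) g)
    have hxt : (x ^ t) ^ k ∈ zpowers (x ^ k) := by
      rw [← zpow_natCast (x ^ t) k, ← zpow_mul, mul_comm t, zpow_mul, zpow_natCast x k]
      exact zpow_mem_zpowers _ t
    rw [← conj_zpow, ← conj_pow, ← ht]
    exact zpow_mem hxt s

theorem normal_zpowers_of_forall_commute {z : G} (hz : ∀ g, Commute g z) :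
    (zpowers z).Normal where
  conj_mem n hn g := by
    obtain ⟨s, rfl⟩ := mem_zpowers_iff.mp hn
    rw [((hz g).zpow_right s).eq, mul_inv_cancel_right]
    exact zpow_mem_zpowers z s

end Cyclic

section Frattini

variable {G : Type*} [Group G]

/-- A maximal `M` missing `g ^ ρ` gives `g = m * g ^ (ρ * s)` with `m ∈ M`, and then
`m = g ^ (1 - ρ * s)` generates `⟨g⟩` since `1 - ρ * s` is prime to `ρ`. -/
theorem pow_mem_frattini {g : G} {ρ e : ℕ} (hg : orderOf g = ρ ^ e)
    [(zpowers (g ^ ρ)).Normal] : g ^ ρ ∈ frattini G := by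
  simp only [frattini, Order.radical, mem_iInf]
  intro M hM
  by_contra hgM
  have htop : M ⊔ zpowers (g ^ ρ) = ⊤ := hM.2 _ (left_lt_sup.mpr (by rwa [zpowers_le]))
  obtain ⟨m, hm, _, ⟨s, rfl⟩, hms⟩ : g ∈ (M : Set G) * zpowers (g ^ ρ) := by
    rw [← mul_normal, htop]; trivial
  have hm_eq : g ^ (1 - ρ * s) = m := by
    rw [eq_mul_inv_of_mul_eq hms, zpow_sub, zpow_one, zpow_mul, zpow_natCast]
  have hcop : IsCoprime (1 - ρ * s) ((ρ : ℤ) ^ e) := IsCoprime.pow_right ⟨1, s, by ring⟩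
  have hg_mem : g ∈ zpowers (g ^ (1 - ρ * s)) := by
    rw [mem_zpowers_zpow_iff, hg, ← Int.isCoprime_iff_gcd_eq_one]
    exact_mod_cast hcop
  exact hgM (pow_mem (zpowers_le.mpr (hm_eq ▸ hm) hg_mem) ρ)

end Frattini

section Normal

variable {G : Type*} [Group G] {N H K : Subgroup G} [N.Normal]

theorem inf_sup_eq_of_le_of_sup_eq_top (hKH : K ≤ H) (hNK : N ⊔ K = ⊤) : H ⊓ N ⊔ K = H := by
  refine le_antisymm (sup_le inf_le_left hKH) fun h hh => ?_
  obtain ⟨a, ha, b, hb, rfl⟩ : h ∈ ((H ⊓ N : Subgroup G) : Set G) * K := by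
    rw [inf_mul_assoc _ _ _ hKH, ← normal_mul, hNK]; exact ⟨hh, trivial⟩
  exact mul_mem (mem_sup_left ha) (mem_sup_right hb)

theorem sup_inf_eq_of_le_of_sup_eq_top (hNH : N ≤ H) (hNK : N ⊔ K = ⊤) : N ⊔ H ⊓ K = H := by
  refine le_antisymm (sup_le hNH inf_le_left) fun h hh => ?_
  have : h ∈ (N : Set G) * ↑(K ⊓ H) := by
    rw [mul_inf_assoc _ _ _ hNH, ← normal_mul, hNK]; exact ⟨trivial, hh⟩
  rwa [← normal_mul, inf_comm] at this

/-- `(w * z ^ c) ^ e = w ^ e ∈ H ⊓ N`, and `w` is a power of `w ^ e` as `e` is prime to its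
order. -/
theorem le_of_le_sup_zpowers {z : G} {e : ℕ}
    (hzK : z ∈ K) (hze : z ^ e = 1) (hcomm : ∀ w ∈ N, Commute w z)
    (hcop : ∀ w ∈ N, e.Coprime (orderOf w)) (hHN : H ⊓ N ≤ K) (hH : H ≤ N ⊔ zpowers z) :
    H ≤ K := by
  intro h hh
  obtain ⟨w, hw, _, ⟨c, rfl⟩, rfl⟩ : h ∈ (N : Set G) * zpowers z := by
    rw [← normal_mul]; exact hH hh
  dsimp only at hh
  have hpow : (w * z ^ c) ^ e = w ^ e := by
    rw [((hcomm w hw).zpow_right c).mul_pow, ← zpow_natCast (z ^ c), ← zpow_mul, mul_comm,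
      zpow_mul, zpow_natCast z e, hze, one_zpow, mul_one]
  have hwK : w ^ e ∈ K := hHN ⟨hpow ▸ pow_mem hh e, pow_mem hw e⟩
  exact mul_mem (zpowers_le.mpr hwK (mem_zpowers_pow_iff.mpr (hcop w hw))) (zpow_mem hzK c)

end Normal

theorem ZMod.orderOf_dvd_of_not_isUnit_one_sub {p m : ℕ} (hp : p.Prime)
    {u : ZMod (p ^ (m + 1))} (hu : ¬ IsUnit (1 - u)) : orderOf u ∣ p ^ m := by
  have : NeZero (p ^ (m + 1)) := ⟨pow_ne_zero _ hp.ne_zero⟩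
  have hval : p ∣ (1 - u).val := by
    rw [← ZMod.natCast_zmod_val (1 - u), ZMod.isUnit_iff_coprime,
      Nat.coprime_pow_right_iff m.succ_pos, Nat.coprime_comm, hp.coprime_iff_not_dvd] at hu
    exact not_not.mp hu
  have hdvd : (p : ZMod (p ^ (m + 1))) ∣ 1 - u := by
    simpa only [ZMod.natCast_zmod_val] using Nat.cast_dvd_cast (α := ZMod (p ^ (m + 1))) hval
  have := dvd_sub_pow_of_dvd_sub hdvd m
  rw [← Nat.cast_pow, ZMod.natCast_self, zero_dvd_iff, one_pow, sub_eq_zero] at this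
  exact orderOf_dvd_of_pow_eq_one this.symm

theorem ZMod.isUnit_one_sub_of_orderOf_eq {p q m : ℕ} (hp : p.Prime) (hq : q.Prime)
    (hpq : p ≠ q) (hm : 1 ≤ m) {u : ZMod (p ^ m)} (hu : orderOf u = q) : IsUnit (1 - u) := by
  obtain ⟨m, rfl⟩ := Nat.exists_eq_add_of_le' hm
  by_contra h
  have hqp : q ∣ p := hq.dvd_of_dvd_pow (hu ▸ orderOf_dvd_of_not_isUnit_one_sub hp h)
  exact hpq ((Nat.prime_dvd_prime_iff_eq hq hp).mp hqp).symm

section Metacyclic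

variable {G : Type*} [Group G] {x y : G} {lam : ℕ}

theorem normal_zpowers_of_inv_mul_mul_mem [Finite G] (hgen : closure {x, y} = ⊤)
    (hconj : y⁻¹ * x * y ∈ zpowers x) : (zpowers x).Normal := by
  rw [← normalizer_eq_top_iff, eq_top_iff, ← hgen, closure_le]
  rintro g (rfl | rfl)
  · exact le_normalizer (mem_zpowers g)
  · refine inv_inv g ▸ inv_mem (mem_normalizer_fintype fun n hn => ?_)
    obtain ⟨k, rfl⟩ := mem_zpowers_iff.mp hn
    rw [← conj_zpow, inv_inv]
    exact zpow_mem hconj k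

theorem sup_zpowers_eq_top_of_closure_eq_top (hgen : closure {x, y} = ⊤) :
    zpowers x ⊔ zpowers y = ⊤ := by
  rw [zpowers_eq_closure, zpowers_eq_closure, ← Subgroup.closure_union, ← Set.insert_eq, hgen]

theorem pow_inv_mul_mul_pow (hconj : y⁻¹ * x * y = x ^ lam) (k : ℕ) :
    (y ^ k)⁻¹ * x * y ^ k = x ^ lam ^ k := by
  induction k with
  | zero => simp
  | succ k ih =>
    calc (y ^ (k + 1))⁻¹ * x * y ^ (k + 1) = y⁻¹ * ((y ^ k)⁻¹ * x * y ^ k) * y⁻¹⁻¹ := by group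
      _ = (y⁻¹ * x * y) ^ lam ^ k := by rw [ih, ← conj_pow, inv_inv]
      _ = x ^ lam ^ (k + 1) := by rw [hconj, ← pow_mul, pow_succ']

theorem commute_pow_of_pow_eq_one (hconj : y⁻¹ * x * y = x ^ lam) {q : ℕ}
    (hlam : (lam : ZMod (orderOf x)) ^ q = 1) : Commute x (y ^ q) := by
  have hx : x ^ lam ^ q = x := by
    conv_rhs => rw [← pow_one x]
    rw [pow_eq_pow_iff_modEq, ← ZMod.natCast_eq_natCast_iff]
    push_cast
    exact hlam
  rw [← pow_inv_mul_mul_pow hconj q] at hx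
  calc x * y ^ q = y ^ q * ((y ^ q)⁻¹ * x * y ^ q) := by group
    _ = y ^ q * x := by rw [hx]

theorem commute_of_closure_eq_top (hgen : closure {x, y} = ⊤) {z : G} (hx : Commute x z)
    (hy : Commute y z) (g : G) : Commute g z := by
  have : closure {x, y} ≤ centralizer {z} := by
    rw [closure_le]
    rintro w (rfl | rfl) <;> exact mem_centralizer_singleton_iff.mpr (by assumption)
  exact mem_centralizer_singleton_iff.mp (this (hgen ▸ mem_top g))

/-- Conjugating `y` by `x ^ j` multiplies it by `x ^ ((1 - λ) j)`; solve for `j` in `ZMod`. -/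
theorem exists_conj_pow_eq_mul_zpow (hconj : y⁻¹ * x * y = x ^ lam) [NeZero (orderOf x)]
    (hunit : IsUnit (1 - (lam : ZMod (orderOf x)))) (c : ℤ) :
    ∃ j : ℕ, (x ^ j)⁻¹ * y * x ^ j = y * x ^ c := by
  set j := ((c : ZMod (orderOf x)) * hunit.unit⁻¹).val
  have hj : (1 - (lam : ZMod (orderOf x))) * j = c := by
    rw [ZMod.natCast_zmod_val, mul_left_comm, hunit.mul_val_inv, mul_one]
  refine ⟨j, ?_⟩
  calc (x ^ j)⁻¹ * y * x ^ j = y * ((y⁻¹ * x * y⁻¹⁻¹) ^ j)⁻¹ * x ^ j := by rw [conj_pow]; group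
    _ = y * x ^ ((j : ℤ) - lam * j) := by
      rw [inv_inv, hconj, ← pow_mul, ← zpow_natCast, ← zpow_natCast, ← zpow_neg, mul_assoc,
        ← zpow_add]
      push_cast; ring_nf
    _ = y * x ^ c := by
      rw [mul_right_inj, zpow_eq_zpow_iff_modEq, ← ZMod.intCast_eq_intCast_iff]
      push_cast
      rw [← hj]; ring

theorem exists_mul_zpow_mem_of_not_le [(zpowers x).Normal] (hsup : zpowers x ⊔ zpowers y = ⊤)
    {q n : ℕ} (hq : q.Prime) (hy : orderOf y = q ^ n) {H : Subgroup G}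
    (hH : ¬ H ≤ zpowers x ⊔ zpowers (y ^ q)) : ∃ c : ℤ, y * x ^ c ∈ H := by
  obtain ⟨h, hh, hhY⟩ := SetLike.not_le_iff_exists.mp hH
  obtain ⟨w, hw, _, ⟨b, rfl⟩, rfl⟩ : h ∈ (zpowers x : Set G) * zpowers y := by
    rw [← normal_mul, hsup]; trivial
  dsimp only at hh hhY
  have hb : IsCoprime b ((q : ℤ) ^ n) := by
    refine IsCoprime.pow_right ((Nat.prime_iff_prime_int.mp hq).coprime_iff_not_dvd.mpr ?_).symm
    rintro ⟨c, rfl⟩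
    exact hhY (mul_mem (mem_sup_left hw) (mem_sup_right ⟨c, by simp [zpow_mul]⟩))
  let π := QuotientGroup.mk' (zpowers x)
  have hπy : π y ∈ zpowers (π y ^ b) := by
    rw [mem_zpowers_zpow_iff, ← Int.isCoprime_iff_gcd_eq_one]
    exact hb.of_isCoprime_of_dvd_right (by exact_mod_cast hy ▸ orderOf_map_dvd π y)
  obtain ⟨e, he⟩ := mem_zpowers_iff.mp hπy
  have hπw : π w = 1 := (QuotientGroup.eq_one_iff w).mpr hw
  have hπ : π y = π ((w * y ^ b) ^ e) := by
    rw [map_zpow, map_mul, hπw, one_mul, map_zpow, he]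
  obtain ⟨c, hc⟩ := mem_zpowers_iff.mp (QuotientGroup.eq.mp hπ)
  exact ⟨c, by rw [hc, mul_inv_cancel_left]; exact zpow_mem hh e⟩

theorem coe_mul_coe_eq_univ [(zpowers x).Normal] (hsup : zpowers x ⊔ zpowers y = ⊤) {g : G}
    (hg : g ∈ zpowers x) {A B : Subgroup G} (hA : g⁻¹ * y * g ∈ A) (hB : x ∈ B) :
    (A : Set G) * (B : Set G) = Set.univ := by
  have htop : zpowers (g⁻¹ * y * g) ⊔ zpowers x = ⊤ := by
    refine eq_top_iff.mpr (hsup ▸ sup_le le_sup_right (zpowers_le.mpr ?_))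
    convert mul_mem (mul_mem (mem_sup_right hg) (mem_sup_left (mem_zpowers _)))
      (mem_sup_right (inv_mem hg)) using 1
    group
  refine Set.eq_univ_of_univ_subset ?_
  rw [← Subgroup.coe_top, ← htop, mul_normal]
  exact Set.mul_subset_mul (SetLike.coe_subset_coe.mpr (zpowers_le.mpr hA))
    (SetLike.coe_subset_coe.mpr (zpowers_le.mpr hB))

theorem eq_sup_zpowers_of_not_le_frattini [(zpowers x).Normal]
    (hsup : zpowers x ⊔ zpowers y = ⊤) {p q m n : ℕ} (hp : p.Prime) (hq : q.Prime) (hpq : p ≠ q)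
    (hx : orderOf x = p ^ m) (hy : orderOf y = q ^ n) (hconj : y⁻¹ * x * y = x ^ lam)
    (hunit : IsUnit (1 - (lam : ZMod (orderOf x)))) (hcomm : Commute x (y ^ q))
    (hxΦ : x ^ p ∈ frattini G) (hyΦ : y ^ q ∈ frattini G) {H : Subgroup G}
    (hH : ¬ H ≤ frattini G) :
    (∃ i j : ℕ, H = zpowers (x ^ p ^ i) ⊔ zpowers ((x ^ j)⁻¹ * y * x ^ j)) ∨
      (∃ k : ℕ, 1 ≤ k ∧ H = zpowers x ⊔ zpowers (y ^ q ^ k)) := by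
  have : NeZero (orderOf x) := ⟨hx ▸ pow_ne_zero _ hp.ne_zero⟩
  obtain ⟨i, hi⟩ := exists_eq_zpowers_pow_prime_pow hp hx (inf_le_right : H ⊓ zpowers x ≤ _)
  by_cases hxH : x ∈ H
  · obtain ⟨k, hk⟩ := exists_eq_zpowers_pow_prime_pow hq hy (inf_le_right : H ⊓ zpowers y ≤ _)
    have hHk : H = zpowers x ⊔ zpowers (y ^ q ^ k) := by
      rw [← hk, sup_inf_eq_of_le_of_sup_eq_top (zpowers_le.mpr hxH) hsup]
    rcases Nat.eq_zero_or_pos k with rfl | hk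
    · exact Or.inl ⟨0, 0, by simpa using hHk⟩
    · exact Or.inr ⟨k, hk, hHk⟩
  by_cases hHY : H ≤ zpowers x ⊔ zpowers (y ^ q)
  · refine absurd (le_of_le_sup_zpowers (e := q ^ n) hyΦ ?_ ?_ ?_ ?_ hHY) hH
    · rw [← pow_mul, mul_comm, pow_mul, ← hy, pow_orderOf_eq_one, one_pow]
    · intro w hw
      obtain ⟨a, rfl⟩ := mem_zpowers_iff.mp hw
      exact hcomm.zpow_left a
    · intro w hw
      exact (Nat.Coprime.pow _ _ ((Nat.coprime_primes hq hp).mpr hpq.symm)).coprime_dvd_right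
        (hx ▸ orderOf_dvd_of_mem_zpowers hw)
    · have hi0 : i ≠ 0 := by
        rintro rfl
        refine hxH (inf_le_left (b := zpowers x) ?_)
        rw [hi, pow_zero, pow_one]
        exact mem_zpowers x
      obtain ⟨i, rfl⟩ := Nat.exists_eq_add_one_of_ne_zero hi0
      rw [hi, zpowers_le, pow_succ', pow_mul]
      exact pow_mem hxΦ _
  · obtain ⟨c, hc⟩ := exists_mul_zpow_mem_of_not_le hsup hq hy hHY
    obtain ⟨j, hj⟩ := exists_conj_pow_eq_mul_zpow hconj hunit c
    have htop : zpowers x ⊔ zpowers (y * x ^ c) = ⊤ := by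
      refine eq_top_iff.mpr (hsup ▸ sup_le le_sup_left (zpowers_le.mpr ?_))
      convert mul_mem (mem_sup_right (mem_zpowers _))
        (mem_sup_left (inv_mem (zpow_mem_zpowers x c))) using 1
      group
    exact Or.inl ⟨i, j, by rw [hj, ← hi, inf_sup_eq_of_le_of_sup_eq_top (zpowers_le.mpr hc) htop]⟩

end Metacyclic

theorem metacyclic_factorization_graph_complete_bipartite_general
    (G : Type*) [Group G] [Finite G] (p q m n lam : ℕ)
    (hp : p.Prime) (hq : q.Prime) (hpq : p ≠ q) (hm : 1 ≤ m)
    (x y : G) (hgen : Subgroup.closure {x, y} = ⊤)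
    (hx : orderOf x = p ^ m) (hy : orderOf y = q ^ n)
    (hconj : y⁻¹ * x * y = x ^ lam)
    (hord : orderOf (lam : ZMod (p ^ m)) = q) :
    (∀ H : Subgroup G, H ≠ ⊤ → ¬ H ≤ frattini G →
      (∃ i j : ℕ, H = zpowers (x ^ p ^ i) ⊔ zpowers ((x ^ j)⁻¹ * y * x ^ j)) ∨
      (∃ k : ℕ, 1 ≤ k ∧ H = zpowers x ⊔ zpowers (y ^ q ^ k))) ∧
    (∀ i j k : ℕ, 1 ≤ k →
      ((zpowers (x ^ p ^ i) ⊔ zpowers ((x ^ j)⁻¹ * y * x ^ j) : Subgroup G) : Set G) *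
        ((zpowers x ⊔ zpowers (y ^ q ^ k) : Subgroup G) : Set G) = Set.univ) := by
  have : (zpowers x).Normal :=
    normal_zpowers_of_inv_mul_mul_mem hgen (hconj ▸ npow_mem_zpowers x lam)
  have hsup := sup_zpowers_eq_top_of_closure_eq_top hgen
  have hlam : (lam : ZMod (orderOf x)) ^ q = 1 := by rw [hx, ← hord]; exact pow_orderOf_eq_one _
  have hcomm : Commute x (y ^ q) := commute_pow_of_pow_eq_one hconj hlam
  have : (zpowers (y ^ q)).Normal :=
    normal_zpowers_of_forall_commute (commute_of_closure_eq_top hgen hcomm (Commute.self_pow y q))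
  have : (zpowers (x ^ p)).Normal := normal_zpowers_pow p
  have hunit : IsUnit (1 - (lam : ZMod (orderOf x))) := by
    rw [hx]; exact ZMod.isUnit_one_sub_of_orderOf_eq hp hq hpq hm hord
  exact ⟨fun H _ hH => eq_sup_zpowers_of_not_le_frattini hsup hp hq hpq hx hy hconj hunit hcomm
      (pow_mem_frattini hx) (pow_mem_frattini hy) hH,
    fun _ j _ _ => coe_mul_coe_eq_univ hsup (npow_mem_zpowers x j)
      (mem_sup_right (mem_zpowers _)) (mem_sup_left (mem_zpowers x))⟩

theorem metacyclic_factorization_graph_complete_bipartite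
    (G : Type*) [Group G] [Finite G] (p q m n lam : ℕ)
    (hp : p.Prime) (hq : q.Prime) (hpq : p ≠ q) (hm : 1 ≤ m) (hn : 1 ≤ n)
    (x y : G) (hgen : Subgroup.closure {x, y} = ⊤)
    (hcard : Nat.card G = p ^ m * q ^ n)
    (hx : orderOf x = p ^ m) (hy : orderOf y = q ^ n)
    (hconj : y⁻¹ * x * y = x ^ lam)
    (hord : orderOf (lam : ZMod (p ^ m)) = q) :
    (∀ H : Subgroup G, H ≠ ⊤ → ¬ H ≤ frattini G →
      (∃ i j : ℕ, H = zpowers (x ^ p ^ i) ⊔ zpowers ((x ^ j)⁻¹ * y * x ^ j)) ∨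
      (∃ k : ℕ, 1 ≤ k ∧ H = zpowers x ⊔ zpowers (y ^ q ^ k))) ∧
    (∀ i j k : ℕ, 1 ≤ k →
      ((zpowers (x ^ p ^ i) ⊔ zpowers ((x ^ j)⁻¹ * y * x ^ j) : Subgroup G) : Set G) *
        ((zpowers x ⊔ zpowers (y ^ q ^ k) : Subgroup G) : Set G) = Set.univ) :=
  metacyclic_factorization_graph_complete_bipartite_general G p q m n lam hp hq hpq hm x y hgen hx
    hy hconj hord
end

section
/- Let G be a finite cyclic group whose order has at least four distinct prime divisors. Then the factorization graph of G contains an induced K_{1,4}: there exist proper subgroups A, B₁, B₂, B₃, B₄ (none contained in Φ(G)) with G = A·Bᵢ for each i and Bᵢ·Bⱼ ≠ G for all i ≠ j. -/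
open scoped Pointwise

/-!
Let `n = |G|`, let `p` be one of the primes dividing `n` and `p ^ e ∥ n`. Since `G` is abelian,
`A = ker (x ↦ x ^ (n / p ^ e))` and `Bᵣ = ker (x ↦ x ^ (p ^ e * r))` are subgroups. Bézout for the
coprime pair `n / p ^ e`, `p ^ e` gives `A * Bᵣ = G`. For primes `r, s` and a prime `q ∣ n` outside
`{p, r, s}`, an element of order `q` (Cauchy) is not killed by `p ^ e * r * p ^ e * s`, so
`Bᵣ * Bₛ ≠ G`; elements of order `r` separate `Bᵣ` from `Bₛ`. With four primes, `r` ranging over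
all of them gives the four leaves. Finally a subgroup that generates `G` together with a proper
subgroup is not contained in the Frattini subgroup.
-/

open Function Set

namespace Subgroup

variable {G : Type*} [Group G]

theorem sup_eq_top_of_coe_mul_eq_univ {H K : Subgroup G} (h : (H : Set G) * (K : Set G) = univ) :
    H ⊔ K = ⊤ := by
  rw [sup_eq_closure_mul, h, closure_univ]

theorem not_le_frattini_left_of_coe_mul_eq_univ [IsCoatomic (Subgroup G)] {H K : Subgroup G}
    (h : (H : Set G) * (K : Set G) = univ) (hK : K ≠ ⊤) : ¬ H ≤ frattini G := fun hH ↦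
  hK <| frattini_nongenerating <| top_le_iff.mp <|
    (sup_eq_top_of_coe_mul_eq_univ h).symm.trans_le (sup_comm H K ▸ sup_le_sup_left hH K)

theorem not_le_frattini_right_of_coe_mul_eq_univ [IsCoatomic (Subgroup G)] {H K : Subgroup G}
    (h : (H : Set G) * (K : Set G) = univ) (hH : H ≠ ⊤) : ¬ K ≤ frattini G := fun hK ↦
  hH <| frattini_nongenerating <| top_le_iff.mp <|
    (sup_eq_top_of_coe_mul_eq_univ h).symm.trans_le (sup_le_sup_left hK H)

end Subgroup

section CommGroup

variable {G : Type*} [CommGroup G]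

theorem mem_ker_powMonoidHom {m : ℕ} {x : G} : x ∈ (powMonoidHom m : G →* G).ker ↔ x ^ m = 1 :=
  Iff.rfl

theorem ker_powMonoidHom_mono {a b : ℕ} (h : a ∣ b) :
    (powMonoidHom a : G →* G).ker ≤ (powMonoidHom b).ker := by
  obtain ⟨c, rfl⟩ := h
  intro x hx
  rw [mem_ker_powMonoidHom] at hx ⊢
  rw [pow_mul, hx, one_pow]

theorem coe_ker_powMonoidHom_mul_subset (a b : ℕ) :
    ((powMonoidHom a : G →* G).ker : Set G) * ((powMonoidHom b : G →* G).ker : Set G) ⊆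
      ((powMonoidHom (a * b) : G →* G).ker : Set G) := by
  rintro _ ⟨x, hx, y, hy, rfl⟩
  rw [SetLike.mem_coe, mem_ker_powMonoidHom] at hx hy ⊢
  rw [mul_pow, pow_mul, hx, one_pow, one_mul, mul_comm, pow_mul, hy, one_pow]

theorem coe_ker_powMonoidHom_mul_eq_univ [Finite G] {a b : ℕ} (hab : a.Coprime b)
    (hG : Nat.card G ∣ a * b) :
    ((powMonoidHom a : G →* G).ker : Set G) * ((powMonoidHom b : G →* G).ker : Set G) = univ := by
  obtain ⟨u, v, huv⟩ := Nat.isCoprime_iff_coprime.mpr hab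
  have pow_ab (x : G) : x ^ (a * b) = 1 := orderOf_dvd_iff_pow_eq_one.mp <|
    (orderOf_dvd_natCard x).trans hG
  refine eq_univ_of_forall fun x ↦ ⟨(x ^ b) ^ v, zpow_mem ?_ v, (x ^ a) ^ u, zpow_mem ?_ u, ?_⟩
  · rw [mem_ker_powMonoidHom, ← pow_mul, mul_comm, pow_ab]
  · rw [mem_ker_powMonoidHom, ← pow_mul, pow_ab]
  · simp only [← zpow_natCast, ← zpow_mul, ← zpow_add]
    rw [mul_comm _ v, mul_comm _ u, add_comm, huv, zpow_one]

variable [Finite G] {q : ℕ}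

theorem exists_forall_mem_ker_powMonoidHom_iff_dvd (hq : q.Prime) (hqG : q ∣ Nat.card G) :
    ∃ x : G, ∀ m, x ∈ (powMonoidHom m : G →* G).ker ↔ q ∣ m := by
  have := Fact.mk hq
  obtain ⟨x, hx⟩ := exists_prime_orderOf_dvd_card' q hqG
  exact ⟨x, fun m ↦ by rw [mem_ker_powMonoidHom, ← orderOf_dvd_iff_pow_eq_one, hx]⟩

theorem ker_powMonoidHom_ne_top (hq : q.Prime) (hqG : q ∣ Nat.card G) {m : ℕ} (hm : ¬ q ∣ m) :
    (powMonoidHom m : G →* G).ker ≠ ⊤ := by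
  obtain ⟨x, hx⟩ := exists_forall_mem_ker_powMonoidHom_iff_dvd (G := G) hq hqG
  exact fun h ↦ hm ((hx m).mp (h ▸ Subgroup.mem_top x))

theorem ker_powMonoidHom_ne (hq : q.Prime) (hqG : q ∣ Nat.card G) {a b : ℕ} (ha : q ∣ a)
    (hb : ¬ q ∣ b) : (powMonoidHom a : G →* G).ker ≠ (powMonoidHom b).ker := by
  obtain ⟨x, hx⟩ := exists_forall_mem_ker_powMonoidHom_iff_dvd (G := G) hq hqG
  exact fun h ↦ hb ((hx b).mp (h ▸ (hx a).mpr ha))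

theorem coe_ker_powMonoidHom_mul_ne_univ (hq : q.Prime) (hqG : q ∣ Nat.card G) {a b : ℕ}
    (ha : ¬ q ∣ a) (hb : ¬ q ∣ b) :
    ((powMonoidHom a : G →* G).ker : Set G) * ((powMonoidHom b : G →* G).ker : Set G) ≠ univ :=
  fun h ↦ ker_powMonoidHom_ne_top hq hqG (fun hab ↦ (hq.dvd_mul.mp hab).elim ha hb) <|
    Subgroup.coe_eq_univ.mp (univ_subset_iff.mp (h ▸ coe_ker_powMonoidHom_mul_subset a b))

end CommGroup

theorem Nat.Prime.not_dvd_ordProj_mul {p r s : ℕ} (n : ℕ) (hp : p.Prime) (hr : r.Prime)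
    (hs : s.Prime) (hpr : p ≠ r) (hps : p ≠ s) : ¬ p ∣ ordProj[r] n * s := by
  rw [hp.dvd_mul, Nat.prime_dvd_prime_iff_eq hp hs, not_or]
  exact ⟨fun h ↦ hpr ((Nat.prime_dvd_prime_iff_eq hp hr).mp (hp.dvd_of_dvd_pow h)), hps⟩

theorem Nat.exists_injective_prime_dvd {n k : ℕ} (h : k ≤ n.primeFactors.card) :
    ∃ q : Fin k → ℕ, Injective q ∧ ∀ i, (q i).Prime ∧ q i ∣ n := by
  obtain ⟨e⟩ : Nonempty (Fin k ↪ n.primeFactors) :=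
    Function.Embedding.nonempty_of_card_le (by simpa using h)
  exact ⟨fun i ↦ e i, Subtype.val_injective.comp e.injective,
    fun i ↦ ⟨Nat.prime_of_mem_primeFactors (e i).2, Nat.dvd_of_mem_primeFactors (e i).2⟩⟩

namespace CommGroup

variable (G : Type*) [CommGroup G]

/-- For `p = pₙ` this is the paper's `A = P₁ ⋯ Pₙ₋₁`. -/
noncomputable def pComplPart (p : ℕ) : Subgroup G := (powMonoidHom (ordCompl[p] (Nat.card G))).ker

/-- The Sylow `p`-subgroup times the elements of order dividing `r`; it plays the role of the
paper's `Bᵢ = Pᵢ Pₙ` for `p = pₙ`, `r = pᵢ`. -/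
noncomputable def pPartMulTorsion (p r : ℕ) : Subgroup G :=
  (powMonoidHom (ordProj[p] (Nat.card G) * r)).ker

variable {G} [Finite G] {p r s : ℕ}

theorem coe_pComplPart_mul_pPartMulTorsion (hp : p.Prime) (r : ℕ) :
    (pComplPart G p : Set G) * (pPartMulTorsion G p r : Set G) = univ := by
  have hn : Nat.card G ≠ 0 := Nat.card_pos.ne'
  refine univ_subset_iff.mp (Eq.subset ?_ |>.trans
    (Set.mul_subset_mul_left (ker_powMonoidHom_mono (dvd_mul_right _ r))))
  exact (coe_ker_powMonoidHom_mul_eq_univ ((Nat.coprime_ordCompl hp hn).pow_left _).symm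
    (by rw [mul_comm, Nat.ordProj_mul_ordCompl_eq_self])).symm

theorem pComplPart_ne_top (hp : p.Prime) (hpG : p ∣ Nat.card G) : pComplPart G p ≠ ⊤ :=
  ker_powMonoidHom_ne_top hp hpG (Nat.not_dvd_ordCompl hp Nat.card_pos.ne')

theorem pPartMulTorsion_ne_top {q : ℕ} (hp : p.Prime) (hr : r.Prime) (hq : q.Prime)
    (hqG : q ∣ Nat.card G) (hqp : q ≠ p) (hqr : q ≠ r) : pPartMulTorsion G p r ≠ ⊤ :=
  ker_powMonoidHom_ne_top hq hqG (hq.not_dvd_ordProj_mul _ hp hr hqp hqr)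

theorem pPartMulTorsion_ne (hp : p.Prime) (hr : r.Prime) (hs : s.Prime) (hrG : r ∣ Nat.card G)
    (hrp : r ≠ p) (hrs : r ≠ s) : pPartMulTorsion G p r ≠ pPartMulTorsion G p s :=
  ker_powMonoidHom_ne hr hrG (dvd_mul_left r _) (hr.not_dvd_ordProj_mul _ hp hs hrp hrs)

theorem coe_pPartMulTorsion_mul_ne_univ {q : ℕ} (hp : p.Prime) (hr : r.Prime) (hs : s.Prime)
    (hq : q.Prime) (hqG : q ∣ Nat.card G) (hqp : q ≠ p) (hqr : q ≠ r) (hqs : q ≠ s) :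
    (pPartMulTorsion G p r : Set G) * (pPartMulTorsion G p s : Set G) ≠ univ :=
  coe_ker_powMonoidHom_mul_ne_univ hq hqG (hq.not_dvd_ordProj_mul _ hp hr hqp hqr)
    (hq.not_dvd_ordProj_mul _ hp hs hqp hqs)

end CommGroup

open CommGroup in
theorem k14_of_cyclic_with_four_prime_divisors
    (G : Type*) [Group G] [Finite G] [IsCyclic G]
    (hprimes : 4 ≤ (Nat.card G).primeFactors.card) :
    ∃ (A : Subgroup G) (B : Fin 4 → Subgroup G),
      (A ≠ ⊤ ∧ ¬ A ≤ frattini G) ∧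
      (∀ i, B i ≠ ⊤ ∧ ¬ B i ≤ frattini G) ∧
      (∀ i, (A : Set G) * (B i : Set G) = Set.univ) ∧
      (∀ i j, i ≠ j → B i ≠ B j ∧ (B i : Set G) * (B j : Set G) ≠ Set.univ) := by
  let _ := IsCyclic.commGroup (α := G)
  obtain ⟨q, hq_inj, hq⟩ := Nat.exists_injective_prime_dvd hprimes
  have hAB i := coe_pComplPart_mul_pPartMulTorsion (G := G) (hq 3).1 (q i)
  have hA := pComplPart_ne_top (G := G) (hq 3).1 (hq 3).2
  have hB i : pPartMulTorsion G (q 3) (q i) ≠ ⊤ := by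
    obtain ⟨k, hki, hk⟩ : ∃ k : Fin 4, k ≠ i ∧ k ≠ 3 := by revert i; decide
    exact pPartMulTorsion_ne_top (hq 3).1 (hq i).1 (hq k).1 (hq k).2 (hq_inj.ne hk)
      (hq_inj.ne hki)
  refine ⟨_, fun i ↦ pPartMulTorsion G (q 3) (q i),
    ⟨hA, Subgroup.not_le_frattini_left_of_coe_mul_eq_univ (hAB 0) (hB 0)⟩,
    fun i ↦ ⟨hB i, Subgroup.not_le_frattini_right_of_coe_mul_eq_univ (hAB i) hA⟩, hAB,
    fun i j hij ↦ ⟨?_, ?_⟩⟩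
  · have hne {i j} (hi : i ≠ 3) (hij : i ≠ j) :=
      pPartMulTorsion_ne (G := G) (hq 3).1 (hq i).1 (hq j).1 (hq i).2 (hq_inj.ne hi)
        (hq_inj.ne hij)
    rcases eq_or_ne i 3 with rfl | hi
    exacts [(hne hij.symm hij.symm).symm, hne hi hij]
  · obtain ⟨k, hki, hkj, hk⟩ : ∃ k : Fin 4, k ≠ i ∧ k ≠ j ∧ k ≠ 3 := by revert i j; decide
    exact coe_pPartMulTorsion_mul_ne_univ (hq 3).1 (hq i).1 (hq j).1 (hq k).1 (hq k).2
      (hq_inj.ne hk) (hq_inj.ne hki) (hq_inj.ne hkj)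
end

section
/- Let G be a finite group admitting a proper factorization G = AB, and suppose the factorization graph F(G) contains no induced 4-cycle. Then for every proper factorization G = AB, either A is normal in G or B is normal in G. -/
open scoped Pointwise

/-- The factorization graph of `G` has an induced 4-cycle (square): four distinct
vertices (proper subgroups not contained in the Frattini subgroup) with the
cycle products equal to `G` and the diagonal products not equal to `G`. -/
def HasInducedSquare (G : Type*) [Group G] : Prop :=
  ∃ A B C D : Subgroup G,
    (A ≠ ⊤ ∧ ¬ A ≤ frattini G) ∧ (B ≠ ⊤ ∧ ¬ B ≤ frattini G) ∧
    (C ≠ ⊤ ∧ ¬ C ≤ frattini G) ∧ (D ≠ ⊤ ∧ ¬ D ≤ frattini G) ∧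
    A ≠ B ∧ A ≠ C ∧ A ≠ D ∧ B ≠ C ∧ B ≠ D ∧ C ≠ D ∧
    (A : Set G) * (B : Set G) = Set.univ ∧ (B : Set G) * (C : Set G) = Set.univ ∧
    (C : Set G) * (D : Set G) = Set.univ ∧ (D : Set G) * (A : Set G) = Set.univ ∧
    (A : Set G) * (C : Set G) ≠ Set.univ ∧ (B : Set G) * (D : Set G) ≠ Set.univ

/-! Suppose `G = AB` with neither factor normal, and pick `g, g'` with `A^g ≠ A` and
`B^{g'} ≠ B`. Writing `g = ab` shows that every conjugate of `B` is some `B^a` with `a ∈ A`, and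
conjugating `G = AB` by `a` gives `G = AB^a`; by symmetry `G = A^x B^y` for all `x, y`. Hence
`A, B, A^g, B^{g'}` is a 4-cycle of `F(G)`. It is induced because `G = H H^x` forces `H = G`, and
its vertices avoid `Φ(G)` because `Φ(G)` is a set of non-generators. -/

namespace Subgroup

variable {G : Type*} [Group G] {A B : Subgroup G}

theorem mul_eq_univ_comm (h : (A : Set G) * (B : Set G) = Set.univ) :
    (B : Set G) * (A : Set G) = Set.univ := by
  rw [← inv_coe_set (H := A), ← inv_coe_set (H := B), ← mul_inv_rev, h, Set.inv_univ]

theorem eq_top_of_mul_self_eq_univ (h : (A : Set G) * (A : Set G) = Set.univ) : A = ⊤ := by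
  rw [← A.coe_toSubmonoid, Submonoid.coe_mul_self_eq] at h
  exact coe_eq_univ.mp h

theorem ne_of_mul_eq_univ (hA : A ≠ ⊤) (h : (A : Set G) * (B : Set G) = Set.univ) :
    A ≠ B := by
  rintro rfl
  exact hA (eq_top_of_mul_self_eq_univ h)

theorem sup_eq_top_of_mul_eq_univ (h : (A : Set G) * (B : Set G) = Set.univ) : A ⊔ B = ⊤ := by
  rw [sup_eq_closure_mul, h, closure_univ]

theorem conj_smul_ne_top (hA : A ≠ ⊤) (g : G) : MulAut.conj g • A ≠ ⊤ := by
  rwa [Ne, ← coe_eq_univ, coe_pointwise_smul, Set.smul_set_eq_univ, coe_eq_univ]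

theorem not_le_frattini_of_mul_eq_univ [IsCoatomic (Subgroup G)] (hB : B ≠ ⊤)
    (h : (A : Set G) * (B : Set G) = Set.univ) : ¬ A ≤ frattini G := fun hA =>
  hB <| frattini_nongenerating <| top_le_iff.mp <|
    (sup_eq_top_of_mul_eq_univ (mul_eq_univ_comm h)).ge.trans (sup_le_sup_left hA B)

theorem exists_mem_conj_smul_eq (h : (A : Set G) * (B : Set G) = Set.univ) (g : G) :
    ∃ a ∈ A, MulAut.conj g • B = MulAut.conj a • B := by
  obtain ⟨a, ha, b, hb, rfl⟩ := Set.mem_mul.mp (h ▸ Set.mem_univ g)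
  exact ⟨a, ha, by rw [map_mul, mul_smul, conj_smul_eq_self_of_mem hb]⟩

theorem mul_conj_smul_eq_univ (h : (A : Set G) * (B : Set G) = Set.univ) (g : G) :
    (A : Set G) * ((MulAut.conj g • B : Subgroup G) : Set G) = Set.univ := by
  obtain ⟨a, ha, hg⟩ := exists_mem_conj_smul_eq h g
  rw [hg, ← conj_smul_eq_self_of_mem ha, coe_pointwise_smul, coe_pointwise_smul, ← smul_mul', h,
    Set.smul_set_univ]

theorem conj_smul_mul_conj_smul_eq_univ (h : (A : Set G) * (B : Set G) = Set.univ) (g g' : G) :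
    ((MulAut.conj g • A : Subgroup G) : Set G) * ((MulAut.conj g' • B : Subgroup G) : Set G) =
      Set.univ :=
  mul_eq_univ_comm <| mul_conj_smul_eq_univ (mul_eq_univ_comm <| mul_conj_smul_eq_univ h g') g

theorem eq_top_of_mul_conj_smul_self_eq_univ {g : G}
    (h : (A : Set G) * ((MulAut.conj g • A : Subgroup G) : Set G) = Set.univ) : A = ⊤ := by
  have := conj_smul_mul_conj_smul_eq_univ h 1 g⁻¹
  rw [map_one, one_smul, map_inv, inv_smul_smul] at this
  exact eq_top_of_mul_self_eq_univ this

end Subgroup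

open Subgroup

theorem hasInducedSquare_of_mul_eq_univ {G : Type*} [Group G] [IsCoatomic (Subgroup G)]
    {A B : Subgroup G} (hA : A ≠ ⊤) (hB : B ≠ ⊤) (hAB : (A : Set G) * (B : Set G) = Set.univ)
    {g g' : G} (hgA : MulAut.conj g • A ≠ A) (hgB : MulAut.conj g' • B ≠ B) :
    HasInducedSquare G := by
  set C := MulAut.conj g • A
  set D := MulAut.conj g' • B
  have hC : C ≠ ⊤ := conj_smul_ne_top hA g
  have hD : D ≠ ⊤ := conj_smul_ne_top hB g'
  have hBC : (B : Set G) * (C : Set G) = Set.univ := mul_conj_smul_eq_univ (mul_eq_univ_comm hAB) g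
  have hCD : (C : Set G) * (D : Set G) = Set.univ := conj_smul_mul_conj_smul_eq_univ hAB g g'
  have hDA : (D : Set G) * (A : Set G) = Set.univ := mul_eq_univ_comm (mul_conj_smul_eq_univ hAB g')
  exact ⟨A, B, C, D,
    ⟨hA, not_le_frattini_of_mul_eq_univ hB hAB⟩, ⟨hB, not_le_frattini_of_mul_eq_univ hC hBC⟩,
    ⟨hC, not_le_frattini_of_mul_eq_univ hD hCD⟩, ⟨hD, not_le_frattini_of_mul_eq_univ hA hDA⟩,
    ne_of_mul_eq_univ hA hAB, hgA.symm, (ne_of_mul_eq_univ hD hDA).symm,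
    ne_of_mul_eq_univ hB hBC, hgB.symm, ne_of_mul_eq_univ hC hCD,
    hAB, hBC, hCD, hDA,
    fun h => hA (eq_top_of_mul_conj_smul_self_eq_univ h),
    fun h => hB (eq_top_of_mul_conj_smul_self_eq_univ h)⟩

theorem normal_factor_of_square_free
    (G : Type*) [Group G] [Finite G]
    (hsf : ¬ HasInducedSquare G) :
    ∀ A B : Subgroup G, A ≠ ⊤ → B ≠ ⊤ →
      (A : Set G) * (B : Set G) = Set.univ → A.Normal ∨ B.Normal := by
  intro A B hA hB hAB
  by_contra! hn
  obtain ⟨g, hg⟩ := not_forall.mp (mt Normal.of_conjugate_fixed hn.1)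
  obtain ⟨g', hg'⟩ := not_forall.mp (mt Normal.of_conjugate_fixed hn.2)
  exact hsf (hasInducedSquare_of_mul_eq_univ hA hB hAB hg hg')
end

section
/- Let G be a finite solvable group whose order has exactly three distinct prime divisors p₁, p₂, p₃, and suppose the factorization graph F(G) is square-free (no induced 4-cycle). If G = P₁P₂P₃ with mutually permuting Sylow pᵢ-subgroups Pᵢ, and every factorization G = Pᵢ(PⱼPₖ) forces PⱼPₖ to be a normal maximal subgroup, then each Pᵢ is cyclic of order pᵢ and normal in G; hence G ≅ C_{p₁p₂p₃}. -/
/-!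
Each `Pᵢ ⊔ Pⱼ` with `i ≠ j` has order `|Pᵢ| |Pⱼ|`, so the intersection of the normal subgroups
`Pᵢ ⊔ Pⱼ` and `Pᵢ ⊔ Pₖ` has order `|Pᵢ|` and equals `Pᵢ`; thus every `Pᵢ` is normal. Now
`Q = Pⱼ ⊔ Pₖ` is a normal coatom meeting `Pᵢ` trivially: for `1 ≠ M ≤ Pᵢ` the subgroup `M ⊔ Q = MQ`
is `G`, and Dedekind's law `Pᵢ ∩ MQ = M (Pᵢ ∩ Q)` gives `M = Pᵢ`. A `p`-group with no proper
nontrivial subgroup has order `p`. The three Sylow subgroups then commute elementwise, and the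
product of their generators has order `p₀ p₁ p₂ = |G|`.
-/

open scoped Pointwise

namespace Subgroup

variable {G : Type*} [Group G]

theorem coe_sup_of_mul_comm {H K : Subgroup G} (hHK : (H : Set G) * K = K * H) :
    ((H ⊔ K : Subgroup G) : Set G) = H * K := by
  let S : Subgroup G :=
    { carrier := H * K
      one_mem' := ⟨1, H.one_mem, 1, K.one_mem, mul_one 1⟩
      mul_mem' := fun ha hb => by
        have h : (H : Set G) * K * (H * K) = H * K := by
          rw [mul_assoc, ← mul_assoc (K : Set G), ← hHK, mul_assoc, coe_mul_coe, ← mul_assoc,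
            coe_mul_coe]
        exact h ▸ Set.mul_mem_mul ha hb
      inv_mem' := fun ha => by
        have h : ((H : Set G) * K)⁻¹ = H * K := by
          rw [mul_inv_rev, inv_coe_set, inv_coe_set, hHK]
        exact h ▸ Set.inv_mem_inv.mpr ha }
  have hS : H ⊔ K = S :=
    le_antisymm (sup_le (fun x hx => ⟨x, hx, 1, K.one_mem, mul_one x⟩)
      fun x hx => ⟨1, H.one_mem, x, hx, one_mul x⟩)
      fun _ ⟨_, ha, _, hb, hx⟩ => hx ▸ mul_mem_sup ha hb
  rw [hS]
  rfl

theorem card_sup_of_mul_comm {H K : Subgroup G} (hHK : (H : Set G) * K = K * H)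
    (hd : Disjoint H K) : Nat.card (H ⊔ K : Subgroup G) = Nat.card H * Nat.card K := by
  rw [← Nat.card_prod, ← SetLike.coe_sort_coe, coe_sup_of_mul_comm hHK]
  refine (Nat.card_congr (Equiv.ofBijective
    (fun x : H × K => ⟨x.1 * x.2, Set.mul_mem_mul x.1.2 x.2.2⟩) ⟨?_, ?_⟩)).symm
  · exact fun x y hxy => mul_injective_of_disjoint hd (congrArg Subtype.val hxy)
  · rintro ⟨_, a, ha, b, hb, rfl⟩
    exact ⟨(⟨a, ha⟩, ⟨b, hb⟩), rfl⟩

theorem card_sup_of_coprime {H K : Subgroup G} (hHK : (H : Set G) * K = K * H)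
    (hcop : (Nat.card H).Coprime (Nat.card K)) :
    Nat.card (H ⊔ K : Subgroup G) = Nat.card H * Nat.card K :=
  card_sup_of_mul_comm hHK (disjoint_of_coprime_natCard hcop)

theorem eq_sup_inf_sup_of_coprime [Finite G] {H K L : Subgroup G}
    (hHK : (H : Set G) * K = K * H) (hHL : (H : Set G) * L = L * H)
    (hcHK : (Nat.card H).Coprime (Nat.card K)) (hcHL : (Nat.card H).Coprime (Nat.card L))
    (hcKL : (Nat.card K).Coprime (Nat.card L)) : H = (H ⊔ K) ⊓ (H ⊔ L) := by
  refine eq_of_le_of_card_ge (le_inf le_sup_left le_sup_left) (Nat.le_of_dvd Nat.card_pos ?_)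
  have h := Nat.dvd_gcd (card_dvd_of_le (inf_le_left (b := H ⊔ L)))
    (card_dvd_of_le (inf_le_right (a := H ⊔ K)))
  rwa [card_sup_of_coprime hHK hcHK, card_sup_of_coprime hHL hcHL, Nat.gcd_mul_left,
    hcKL.gcd_eq_one, mul_one] at h

theorem eq_bot_or_eq_of_disjoint_isCoatom {H M Q : Subgroup G} [Q.Normal] (hQ : IsCoatom Q)
    (hd : Disjoint H Q) (hMH : M ≤ H) : M = ⊥ ∨ M = H := by
  refine or_iff_not_imp_left.mpr fun hM => le_antisymm hMH fun h hh => ?_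
  have hMQ : M ⊔ Q = ⊤ := hQ.lt_iff.mp <| lt_of_le_of_ne le_sup_right fun hQM =>
    hM <| (hd.mono_left hMH).eq_bot_of_le (le_sup_left.trans hQM.ge)
  obtain ⟨m, hm, q, hq, rfl⟩ := mem_sup_of_normal_right.mp (hMQ ▸ mem_top h)
  have hq1 : q = 1 :=
    disjoint_def.mp hd (by simpa using H.mul_mem (H.inv_mem (hMH hm)) hh) hq
  simpa [hq1] using hm

theorem _root_.IsPGroup.card_eq_of_isCoatom [Finite G] {p : ℕ} [Fact p.Prime]
    {H Q : Subgroup G} [Q.Normal] (hH : IsPGroup p H) (hQ : IsCoatom Q) (hHQ : H ⊔ Q = ⊤)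
    (hd : Disjoint H Q) : Nat.card H = p := by
  have hH1 : Nat.card H ≠ 1 := fun h =>
    hQ.1 (by rwa [card_eq_one.mp h, bot_sup_eq] at hHQ)
  obtain ⟨x, hx⟩ := exists_prime_orderOf_dvd_card' p (hH.card_eq_or_dvd.resolve_left hH1)
  have hxH : zpowers (x : G) = H :=
    (eq_bot_or_eq_of_disjoint_isCoatom hQ hd (zpowers_le.mpr x.2)).resolve_left fun h =>
      (Fact.out : p.Prime).ne_one <| hx ▸ orderOf_eq_one_iff.mpr
        (OneMemClass.coe_eq_one.mp (zpowers_eq_bot.mp h))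
  rw [← hxH, Nat.card_zpowers, orderOf_coe, hx]

theorem isCyclic_sup_of_coprime [Finite G] {H K : Subgroup G} [H.Normal] [K.Normal]
    [IsCyclic H] [IsCyclic K] (hcop : (Nat.card H).Coprime (Nat.card K)) :
    IsCyclic (H ⊔ K : Subgroup G) := by
  obtain ⟨a, ha⟩ := IsCyclic.exists_ofOrder_eq_natCard (α := H)
  obtain ⟨b, hb⟩ := IsCyclic.exists_ofOrder_eq_natCard (α := K)
  have hab : Commute (a : G) b :=
    commute_of_normal_of_disjoint H K ‹_› ‹_› (disjoint_of_coprime_natCard hcop) a b a.2 b.2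
  refine isCyclic_of_orderOf_eq_card ⟨a * b, mul_mem_sup a.2 b.2⟩ ?_
  rw [orderOf_mk, hab.orderOf_mul_eq_mul_orderOf_of_coprime (by simpa [ha, hb] using hcop),
    orderOf_coe, orderOf_coe, ha, hb, card_sup_of_coprime (set_mul_normal_comm _ _).symm hcop]

theorem normal_and_card_eq_of_isCoatom [Finite G] {p : ℕ} [Fact p.Prime] {H K L : Subgroup G}
    (hH : IsPGroup p H) (hHK : (H : Set G) * K = K * H) (hHL : (H : Set G) * L = L * H)
    (hKL : (K : Set G) * L = L * K) (hcHK : (Nat.card H).Coprime (Nat.card K))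
    (hcHL : (Nat.card H).Coprime (Nat.card L)) (hcKL : (Nat.card K).Coprime (Nat.card L))
    (htop : H ⊔ (K ⊔ L) = ⊤) [(H ⊔ K).Normal] [(H ⊔ L).Normal] [(K ⊔ L).Normal]
    (hmax : IsCoatom (K ⊔ L)) : H.Normal ∧ Nat.card H = p := by
  refine ⟨?_, hH.card_eq_of_isCoatom hmax htop (disjoint_of_coprime_natCard ?_)⟩
  · rw [eq_sup_inf_sup_of_coprime hHK hHL hcHK hcHL hcKL]
    infer_instance
  · rw [card_sup_of_coprime hKL hcKL]
    exact hcHK.mul_right hcHL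

theorem normal_and_card_eq_of_isCoatom_fin_three [Finite G] {P : Fin 3 → Subgroup G}
    (hperm : ∀ i j, (P i : Set G) * (P j : Set G) = (P j : Set G) * (P i : Set G))
    (hcop : ∀ i j, i ≠ j → (Nat.card (P i)).Coprime (Nat.card (P j)))
    (hprod : (⨆ i, P i) = ⊤)
    (hnormalmax : ∀ i j k : Fin 3, ({i, j, k} : Finset (Fin 3)) = Finset.univ →
      (P j ⊔ P k).Normal ∧ IsCoatom (P j ⊔ P k))
    {p : ℕ} [Fact p.Prime] (i : Fin 3) (hP : IsPGroup p (P i)) :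
    (P i).Normal ∧ Nat.card (P i) = p := by
  have hU : ({i, i + 1, i + 2} : Finset (Fin 3)) = Finset.univ ∧
      ({i + 2, i, i + 1} : Finset (Fin 3)) = Finset.univ ∧
      ({i + 1, i, i + 2} : Finset (Fin 3)) = Finset.univ := by
    fin_cases i <;> decide
  have hne : i ≠ i + 1 ∧ i ≠ i + 2 ∧ i + 1 ≠ i + 2 := by fin_cases i <;> decide
  have htop : P i ⊔ (P (i + 1) ⊔ P (i + 2)) = ⊤ := by
    rw [← hprod, iSup_fin_three]
    fin_cases i <;> simp only [Fin.reduceFinMk, Fin.reduceAdd, Fin.isValue] <;> ac_rfl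
  have hN₁ : (P i ⊔ P (i + 1)).Normal := (hnormalmax _ _ _ hU.2.1).1
  have hN₂ : (P i ⊔ P (i + 2)).Normal := (hnormalmax _ _ _ hU.2.2).1
  obtain ⟨hQ, hmax⟩ := hnormalmax _ _ _ hU.1
  exact normal_and_card_eq_of_isCoatom hP (hperm _ _) (hperm _ _) (hperm _ _)
    (hcop _ _ hne.1) (hcop _ _ hne.2.1) (hcop _ _ hne.2.2) htop hmax

end Subgroup

theorem cyclic_of_three_primes_square_free_general
    (G : Type*) [Group G] [Finite G]
    (p : Fin 3 → ℕ) (hp : ∀ i, (p i).Prime) (hdist : Function.Injective p)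
    (P : Fin 3 → Subgroup G)
    (hSyl : ∀ i, IsPGroup (p i) (P i) ∧ ¬ p i ∣ (P i).index)
    (hperm : ∀ i j, (P i : Set G) * (P j : Set G) = (P j : Set G) * (P i : Set G))
    (hprod : (⨆ i, P i) = ⊤)
    (hnormalmax : ∀ i j k : Fin 3, ({i, j, k} : Finset (Fin 3)) = Finset.univ →
      (P j ⊔ P k).Normal ∧ IsCoatom (P j ⊔ P k)) :
    (∀ i, Nat.card (P i) = p i ∧ (P i).Normal ∧ IsCyclic (P i)) ∧
      IsCyclic G ∧ Nat.card G = p 0 * p 1 * p 2 := by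
  have hfact i : Fact (p i).Prime := ⟨hp i⟩
  have hcop i j (hij : i ≠ j) : (Nat.card (P i)).Coprime (Nat.card (P j)) :=
    IsPGroup.coprime_card_of_ne _ _ (hdist.ne hij) _ _ (hSyl i).1 (hSyl j).1
  have hsylow i :=
    Subgroup.normal_and_card_eq_of_isCoatom_fin_three hperm hcop hprod hnormalmax i (hSyl i).1
  have hnorm i : (P i).Normal := (hsylow i).1
  have hcyc i : IsCyclic (P i) := isCyclic_of_prime_card (hsylow i).2
  have h01 : (P 0 ⊔ P 1).Normal := (hnormalmax 2 0 1 (by decide)).1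
  have hc01 := Subgroup.card_sup_of_coprime (hperm 0 1) (hcop 0 1 (by decide))
  have hc012 : (Nat.card (P 0 ⊔ P 1 : Subgroup G)).Coprime (Nat.card (P 2)) :=
    hc01 ▸ (hcop 0 2 (by decide)).mul_left (hcop 1 2 (by decide))
  have htop : P 0 ⊔ P 1 ⊔ P 2 = ⊤ := iSup_fin_three.symm.trans hprod
  have hcyc01 : IsCyclic (P 0 ⊔ P 1 : Subgroup G) :=
    Subgroup.isCyclic_sup_of_coprime (hcop 0 1 (by decide))
  have hG : IsCyclic (P 0 ⊔ P 1 ⊔ P 2 : Subgroup G) := Subgroup.isCyclic_sup_of_coprime hc012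
  refine ⟨fun i => ⟨(hsylow i).2, hnorm i, hcyc i⟩, ?_, ?_⟩
  · exact Subgroup.topEquiv.isCyclic.mp (htop ▸ hG)
  · rw [← Subgroup.card_top, ← htop,
      Subgroup.card_sup_of_coprime (Subgroup.set_mul_normal_comm _ _).symm hc012, hc01,
      (hsylow 0).2, (hsylow 1).2, (hsylow 2).2]

theorem cyclic_of_three_primes_square_free
    (G : Type*) [Group G] [Finite G] [Group.IsSolvable G]
    (p : Fin 3 → ℕ) (hp : ∀ i, (p i).Prime) (hdist : Function.Injective p)
    (hpi : (Nat.card G).primeFactors = {p 0, p 1, p 2})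
    (hsf : ¬ HasInducedSquare G)
    (P : Fin 3 → Subgroup G)
    (hSyl : ∀ i, IsPGroup (p i) (P i) ∧ ¬ p i ∣ (P i).index)
    (hperm : ∀ i j, (P i : Set G) * (P j : Set G) = (P j : Set G) * (P i : Set G))
    (hprod : (⨆ i, P i) = ⊤)
    (hnormalmax : ∀ i j k : Fin 3, ({i, j, k} : Finset (Fin 3)) = Finset.univ →
      (P j ⊔ P k).Normal ∧ IsCoatom (P j ⊔ P k)) :
    (∀ i, Nat.card (P i) = p i ∧ (P i).Normal ∧ IsCyclic (P i)) ∧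
      IsCyclic G ∧ Nat.card G = p 0 * p 1 * p 2 :=
  cyclic_of_three_primes_square_free_general G p hp hdist P hSyl hperm hprod hnormalmax
end

section
/- Let H be a finite non-abelian simple group admitting no proper factorization (i.e., H ≠ AB for all proper subgroups A, B of H), let p be a prime, and set G = H × C_p. Then every proper factorization G = XY of G satisfies (up to swapping X and Y): X = H × 1 and Y is a subgroup with π₁(Y) a proper subgroup of H and π₂(Y) = C_p, where πᵢ are the coordinate projections. -/
open scoped Pointwise

/-!
Projecting a factorization `H × C_p = XY` to `H` gives a factorization of `H`, so one factor,
say `X`, maps onto `H`. By Goursat's lemma, a subgroup of `H × C_p` projecting onto both factors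
induces an isomorphism between a quotient of `H` and a quotient of `C_p`; as `H` is simple and
non-abelian, such a subgroup is everything. So the proper subgroup `X` projects trivially to `C_p`,
i.e. `X = H × 1`; then `Y` must project onto `C_p`, hence not onto `H`.
-/

namespace Subgroup

variable {G K : Type*} [Group G] [Group K]

theorem coe_mul_coe_eq_univ_comm {X Y : Subgroup G} (h : (X : Set G) * (Y : Set G) = Set.univ) :
    (Y : Set G) * (X : Set G) = Set.univ := by
  simpa [mul_inv_rev, inv_coe_set] using congrArg Inv.inv h

theorem coe_map_mul_coe_map_eq_univ {X Y : Subgroup G} {f : G →* K}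
    (hf : Function.Surjective f) (h : (X : Set G) * (Y : Set G) = Set.univ) :
    (X.map f : Set K) * (Y.map f : Set K) = Set.univ := by
  rw [coe_map, coe_map, ← Set.image_mul, h, Set.image_univ, Set.range_eq_univ.2 hf]

theorem eq_top_of_coe_bot_mul_coe_eq_univ {Y : Subgroup G}
    (h : ((⊥ : Subgroup G) : Set G) * (Y : Set G) = Set.univ) : Y = ⊤ := by
  rwa [coe_bot, Set.singleton_one, one_mul, coe_eq_univ] at h

theorem eq_prod_top_bot {X : Subgroup (G × K)} (hfst : X.map (MonoidHom.fst G K) = ⊤)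
    (hsnd : X.map (MonoidHom.snd G K) = ⊥) : X = (⊤ : Subgroup G).prod ⊥ := by
  refine le_antisymm (le_prod_iff.2 ⟨le_top, hsnd.le⟩) ?_
  rintro ⟨g, k⟩ ⟨-, hk : k = 1⟩
  obtain ⟨x, hx, rfl⟩ := mem_map.1 (hfst ▸ mem_top g)
  have hx2 : x.2 = 1 := mem_bot.1 (hsnd ▸ mem_map_of_mem (MonoidHom.snd G K) hx)
  simpa [hk, ← hx2] using hx

theorem eq_top_of_map_fst_eq_top_of_map_snd_eq_top {C : Type*} [IsSimpleGroup G] [CommGroup C]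
    (hG : ∃ a b : G, a * b ≠ b * a) {X : Subgroup (G × C)}
    (hfst : X.map (MonoidHom.fst G C) = ⊤) (hsnd : X.map (MonoidHom.snd G C) = ⊤) :
    X = ⊤ := by
  have hI₁ : Function.Surjective (Prod.fst ∘ X.subtype) :=
    (MonoidHom.range_eq_top (f := (MonoidHom.fst G C).comp X.subtype)).1
      (by rwa [MonoidHom.range_comp, range_subtype])
  have hI₂ : Function.Surjective (Prod.snd ∘ X.subtype) :=
    (MonoidHom.range_eq_top (f := (MonoidHom.snd G C).comp X.subtype)).1
      (by rwa [MonoidHom.range_comp, range_subtype])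
  have hNfst := normal_goursatFst hI₁
  have := normal_goursatSnd hI₂
  obtain ⟨e, -⟩ := goursat_surjective hI₁ hI₂
  rcases IsSimpleGroup.eq_bot_or_eq_top_of_normal _ hNfst with hbot | htop
  · obtain ⟨a, b, hab⟩ := hG
    let φ : G →* C ⧸ X.goursatSnd := e.toMonoidHom.comp (QuotientGroup.mk' X.goursatFst)
    have hφ : Function.Injective φ :=
      e.injective.comp ((MonoidHom.ker_eq_bot_iff _).1 ((QuotientGroup.ker_mk' _).trans hbot))
    exact (hab (hφ (by rw [map_mul, map_mul, mul_comm]))).elim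
  · have : Subsingleton (C ⧸ X.goursatSnd) := by
      have : Subsingleton (G ⧸ X.goursatFst) := QuotientGroup.subsingleton_iff.2 htop
      exact e.symm.injective.subsingleton
    have hsnd_top := QuotientGroup.subsingleton_iff.1 this
    rw [eq_top_iff, ← top_prod_top, ← htop, ← hsnd_top]
    exact goursatFst_prod_goursatSnd_le X

theorem factorization_of_map_fst_eq_top {C : Type*} [IsSimpleGroup G] [CommGroup C]
    [IsSimpleGroup C] (hG : ∃ a b : G, a * b ≠ b * a) {X Y : Subgroup (G × C)} (hX : X ≠ ⊤)
    (hY : Y ≠ ⊤) (hXY : (X : Set (G × C)) * (Y : Set (G × C)) = Set.univ)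
    (hXfst : X.map (MonoidHom.fst G C) = ⊤) :
    X = (⊤ : Subgroup G).prod ⊥ ∧ Y.map (MonoidHom.fst G C) ≠ ⊤ ∧
      Y.map (MonoidHom.snd G C) = ⊤ := by
  have hXsnd : X.map (MonoidHom.snd G C) = ⊥ :=
    (IsSimpleGroup.eq_bot_or_eq_top_of_normal _ (normal_of_isMulCommutative _)).resolve_right
      fun h ↦ hX (eq_top_of_map_fst_eq_top_of_map_snd_eq_top hG hXfst h)
  have hYsnd : Y.map (MonoidHom.snd G C) = ⊤ := eq_top_of_coe_bot_mul_coe_eq_univ <|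
    hXsnd ▸ coe_map_mul_coe_map_eq_univ Prod.snd_surjective hXY
  exact ⟨eq_prod_top_bot hXfst hXsnd,
    fun hYfst ↦ hY (eq_top_of_map_fst_eq_top_of_map_snd_eq_top hG hYfst hYsnd), hYsnd⟩

end Subgroup

theorem factorizations_of_simple_times_cyclic_general
    (H : Type*) [Group H] [IsSimpleGroup H]
    (hna : ∃ a b : H, a * b ≠ b * a)
    (hnofact : ∀ A B : Subgroup H, A ≠ ⊤ → B ≠ ⊤ →
      (A : Set H) * (B : Set H) ≠ Set.univ)
    (p : ℕ) (hp : p.Prime) :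
    ∀ X Y : Subgroup (H × Multiplicative (ZMod p)), X ≠ ⊤ → Y ≠ ⊤ →
      (X : Set (H × Multiplicative (ZMod p))) * (Y : Set (H × Multiplicative (ZMod p))) =
        Set.univ →
      (X = Subgroup.prod ⊤ ⊥ ∧
        Y.map (MonoidHom.fst H (Multiplicative (ZMod p))) ≠ ⊤ ∧
        Y.map (MonoidHom.snd H (Multiplicative (ZMod p))) = ⊤) ∨
      (Y = Subgroup.prod ⊤ ⊥ ∧
        X.map (MonoidHom.fst H (Multiplicative (ZMod p))) ≠ ⊤ ∧
        X.map (MonoidHom.snd H (Multiplicative (ZMod p))) = ⊤) := by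
  intro X Y hX hY hXY
  have : IsSimpleGroup (Multiplicative (ZMod p)) :=
    CommGroup.is_simple_iff_prime_card.2 ((Nat.card_zmod p).symm ▸ hp)
  by_cases hXfst : X.map (MonoidHom.fst _ _) = ⊤
  · exact .inl (Subgroup.factorization_of_map_fst_eq_top hna hX hY hXY hXfst)
  · have hYfst : Y.map (MonoidHom.fst _ _) = ⊤ := by
      by_contra hYfst
      exact hnofact _ _ hXfst hYfst (Subgroup.coe_map_mul_coe_map_eq_univ Prod.fst_surjective hXY)
    exact .inr (Subgroup.factorization_of_map_fst_eq_top hna hY hX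
      (Subgroup.coe_mul_coe_eq_univ_comm hXY) hYfst)

theorem factorizations_of_simple_times_cyclic
    (H : Type*) [Group H] [Finite H] [IsSimpleGroup H]
    (hna : ∃ a b : H, a * b ≠ b * a)
    (hnofact : ∀ A B : Subgroup H, A ≠ ⊤ → B ≠ ⊤ →
      (A : Set H) * (B : Set H) ≠ Set.univ)
    (p : ℕ) (hp : p.Prime) :
    ∀ X Y : Subgroup (H × Multiplicative (ZMod p)), X ≠ ⊤ → Y ≠ ⊤ →
      (X : Set (H × Multiplicative (ZMod p))) * (Y : Set (H × Multiplicative (ZMod p))) =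
        Set.univ →
      (X = Subgroup.prod ⊤ ⊥ ∧
        Y.map (MonoidHom.fst H (Multiplicative (ZMod p))) ≠ ⊤ ∧
        Y.map (MonoidHom.snd H (Multiplicative (ZMod p))) = ⊤) ∨
      (Y = Subgroup.prod ⊤ ⊥ ∧
        X.map (MonoidHom.fst H (Multiplicative (ZMod p))) ≠ ⊤ ∧
        X.map (MonoidHom.snd H (Multiplicative (ZMod p))) = ⊤) :=
  factorizations_of_simple_times_cyclic_general H hna hnofact p hp
end

section
/- Let G be a finite group such that F(G) is bipartite with bipartition (U, V) and has no isolated vertex. If H and K are proper subgroups of G not contained in Φ(G) with H ∈ U and K ∈ V, then H ∩ K ⊆ Φ(G). -/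
open scoped Pointwise

lemma Subgroup.coe_mul_eq_univ_of_le {G : Type*} [Group G] {L N M : Subgroup G} (hLN : L ≤ N)
    (h : (L : Set G) * (M : Set G) = Set.univ) : (N : Set G) * (M : Set G) = Set.univ :=
  Set.eq_univ_of_univ_subset (h ▸ Set.mul_subset_mul_right (SetLike.coe_subset_coe.mpr hLN))

lemma Set.mem_right_of_mem_left_of_disjoint {α : Type*} {U V : Set α} (hdisj : Disjoint U V)
    {a b : α} (hab : (a ∈ U ∧ b ∈ V) ∨ (a ∈ V ∧ b ∈ U)) (ha : a ∈ U) : b ∈ V :=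
  hab.elim And.right fun h => absurd h.1 (Set.disjoint_left.mp hdisj ha)

-- A neighbour `M` of `H ⊓ K` is also a neighbour of `H` and of `K`, so it would lie in both parts.
theorem inter_le_frattini_of_bipartite_general
    (G : Type*) [Group G]
    (U V : Set (Subgroup G))
    (hdisj : Disjoint U V)
    -- every edge joins U to V
    (hbip : ∀ H K : Subgroup G, H ≠ ⊤ → ¬ H ≤ frattini G → K ≠ ⊤ → ¬ K ≤ frattini G →
      (H : Set G) * (K : Set G) = Set.univ →
      (H ∈ U ∧ K ∈ V) ∨ (H ∈ V ∧ K ∈ U))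
    -- no isolated vertex
    (hiso : ∀ H : Subgroup G, H ≠ ⊤ → ¬ H ≤ frattini G →
      ∃ K : Subgroup G, K ≠ ⊤ ∧ ¬ K ≤ frattini G ∧
        (H : Set G) * (K : Set G) = Set.univ) :
    ∀ H K : Subgroup G, H ≠ ⊤ → ¬ H ≤ frattini G → K ≠ ⊤ → ¬ K ≤ frattini G →
      H ∈ U → K ∈ V → H ⊓ K ≤ frattini G := by
  intro H K hHt hHf hKt hKf hHU hKV
  by_contra hLf
  obtain ⟨M, hMt, hMf, hLM⟩ := hiso (H ⊓ K) (ne_top_of_le_ne_top hHt inf_le_left) hLf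
  have hMV : M ∈ V := Set.mem_right_of_mem_left_of_disjoint hdisj
    (hbip H M hHt hHf hMt hMf (Subgroup.coe_mul_eq_univ_of_le inf_le_left hLM)) hHU
  have hMU : M ∈ U := Set.mem_right_of_mem_left_of_disjoint hdisj.symm
    (hbip K M hKt hKf hMt hMf (Subgroup.coe_mul_eq_univ_of_le inf_le_right hLM)).symm hKV
  exact Set.disjoint_left.mp hdisj hMU hMV

theorem inter_le_frattini_of_bipartite
    (G : Type*) [Group G] [Finite G]
    (U V : Set (Subgroup G))
    -- the parts consist of vertices and partition the vertex set
    (hUV : ∀ H : Subgroup G, (H ∈ U ∨ H ∈ V) ↔ (H ≠ ⊤ ∧ ¬ H ≤ frattini G))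
    (hdisj : Disjoint U V)
    -- every edge joins U to V
    (hbip : ∀ H K : Subgroup G, H ≠ ⊤ → ¬ H ≤ frattini G → K ≠ ⊤ → ¬ K ≤ frattini G →
      (H : Set G) * (K : Set G) = Set.univ →
      (H ∈ U ∧ K ∈ V) ∨ (H ∈ V ∧ K ∈ U))
    -- no isolated vertex
    (hiso : ∀ H : Subgroup G, H ≠ ⊤ → ¬ H ≤ frattini G →
      ∃ K : Subgroup G, K ≠ ⊤ ∧ ¬ K ≤ frattini G ∧
        (H : Set G) * (K : Set G) = Set.univ) :
    ∀ H K : Subgroup G, H ≠ ⊤ → ¬ H ≤ frattini G → K ≠ ⊤ → ¬ K ≤ frattini G →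
      H ∈ U → K ∈ V → H ⊓ K ≤ frattini G :=
  inter_le_frattini_of_bipartite_general G U V hdisj hbip hiso
end

section
/- Let G be a finite group with a normal maximal subgroup N and a non-normal maximal subgroup H with [G : N_G(H)] ≤ 3 and every proper subgroup of H contained in N. Then [G : H] = 3, H is a cyclic 2-group, and H_G = Z(G), so G ≅ ⟨x,y : x^{2^n} = y³ = 1, y^x = y^{-1}, (x²)^y = x²⟩. -/
theorem structure_from_nonnormal_maximal
    (G : Type*) [Group G] [Finite G]
    (N H : Subgroup G) (hN : N.Normal) (hNmax : IsCoatom N)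
    (hHnn : ¬ H.Normal) (hHmax : IsCoatom H)
    (hnorm : (Subgroup.normalizer (H : Set G)).index ≤ 3)
    (hsub : ∀ K : Subgroup G, K < H → K ≤ N) :
    H.index = 3 ∧ IsCyclic H ∧ (∃ n : ℕ, Nat.card H = 2 ^ n) ∧
      H.normalCore = Subgroup.center G ∧
      ∃ (n : ℕ) (x y : G), Subgroup.closure {x, y} = ⊤ ∧
        orderOf x = 2 ^ n ∧ orderOf y = 3 ∧
        x⁻¹ * y * x = y⁻¹ ∧ y⁻¹ * (x ^ 2) * y = x ^ 2 ∧
        Nat.card G = 3 * 2 ^ n := by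
  classical
  -- Step A: the normalizer of H is H itself
  have hnorm_eq : Subgroup.normalizer (H : Set G) = H := by
    rcases (Subgroup.le_normalizer (H := H)).lt_or_eq with hlt | he
    · exact absurd (Subgroup.normalizer_eq_top_iff.mp (hHmax.2 _ hlt)) hHnn
    · exact he.symm
  -- Step B: H has index 3
  have hidx3 : H.index = 3 := by
    have h1 : H.index ≠ 0 := Subgroup.index_ne_zero_of_finite
    have h2 : H.index ≠ 1 := fun h => hHmax.1 (Subgroup.index_eq_one.mp h)
    have h3 : H.index ≠ 2 := by
      intro h
      apply hHnn
      constructor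
      intro a ha g
      have k1 : g * a * g⁻¹ ∈ H ↔ (g * a ∈ H ↔ g⁻¹ ∈ H) :=
        Subgroup.mul_mem_iff_of_index_two h
      have k2 : g * a ∈ H ↔ (g ∈ H ↔ a ∈ H) := Subgroup.mul_mem_iff_of_index_two h
      rw [k1, k2, inv_mem_iff]
      tauto
    have h4 : H.index ≤ 3 := hnorm_eq ▸ hnorm
    omega
  -- Step C: H is cyclic generated by some x ∉ N
  have hHnleN : ¬ H ≤ N := by
    intro hle
    rcases hle.lt_or_eq with hlt | he
    · exact hNmax.1 (hHmax.2 _ hlt)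
    · exact hHnn (he ▸ hN)
  obtain ⟨x, hxH, hxN⟩ : ∃ x ∈ H, x ∉ N := by
    by_contra hcon; push_neg at hcon; exact hHnleN hcon
  have hHx : H = Subgroup.zpowers x := by
    have hle : Subgroup.zpowers x ≤ H := Subgroup.zpowers_le.mpr hxH
    rcases hle.lt_or_eq with hlt | he
    · exact absurd (hsub _ hlt (Subgroup.mem_zpowers x)) hxN
    · exact he.symm
  have hcyc : IsCyclic H := by
    rw [hHx]
    exact isCyclic_of_orderOf_eq_card ⟨x, Subgroup.mem_zpowers x⟩ (by
      rw [Nat.card_zpowers, Subgroup.orderOf_mk])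
  -- Step D: the normal core has index 6
  have hcore_le : H.normalCore ≤ H := H.normalCore_le
  have hidx_core_dvd6 : H.normalCore.index ∣ 6 := by
    rw [Subgroup.normalCore_eq_ker, Subgroup.index_ker]
    have hd : Nat.card (MulAction.toPermHom G (G ⧸ H)).range ∣
        Nat.card (Equiv.Perm (G ⧸ H)) := Subgroup.card_subgroup_dvd_card _
    have hcard3 : Nat.card (G ⧸ H) = 3 := hidx3
    haveI : Fintype (G ⧸ H) := Fintype.ofFinite _
    have hcardp : Nat.card (Equiv.Perm (G ⧸ H)) = 6 := by
      rw [Nat.card_eq_fintype_card, Fintype.card_perm, ← Nat.card_eq_fintype_card, hcard3]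
      rfl
    rwa [hcardp] at hd
  have h3dvd : 3 ∣ H.normalCore.index := hidx3 ▸ Subgroup.index_dvd_of_le hcore_le
  have hidx_core : H.normalCore.index = 6 := by
    obtain ⟨e, he⟩ := h3dvd
    have he2 : e ∣ 2 := by
      have : 3 * e ∣ 3 * 2 := by rw [← he]; exact hidx_core_dvd6
      exact (mul_dvd_mul_iff_left (by norm_num : (3:ℕ) ≠ 0)).mp this
    have he0 : e ≠ 0 := by
      intro h0
      exact Subgroup.index_ne_zero_of_finite (H := H.normalCore) (by omega)
    have he1 : 1 ≤ e := by omega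
    have heub : e ≤ 2 := Nat.le_of_dvd (by norm_num) he2
    interval_cases e
    · exfalso
      apply hHnn
      have hrel := Subgroup.relIndex_mul_index hcore_le
      rw [hidx3, he] at hrel
      have hr1 : H.normalCore.relIndex H = 1 := by omega
      have hle2 : H ≤ H.normalCore := Subgroup.relIndex_eq_one.mp hr1
      have heq : H.normalCore = H := le_antisymm hcore_le hle2
      exact heq ▸ (H.normalCore_normal)
    · omega
  have hrel2 : H.normalCore.relIndex H = 2 := by
    have hrel := Subgroup.relIndex_mul_index hcore_le
    rw [hidx3, hidx_core] at hrel
    omega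
  have h2dvd : 2 ∣ Nat.card H := by
    rw [← hrel2]
    exact Subgroup.index_dvd_card (H.normalCore.subgroupOf H)
  -- Step E: H is a 2-group
  have hcardH : Nat.card H = orderOf x := by rw [hHx, Nat.card_zpowers]
  set m := orderOf x with hm
  have hm0 : m ≠ 0 := by
    have := Nat.card_pos (α := H)
    omega
  have h2m : 2 ∣ m := hcardH ▸ h2dvd
  -- a helper: powers of x generating proper subgroups lie in N
  have hpowN : ∀ c : ℕ, c ∣ m → c ≠ 1 → x ^ c ∈ N := by
    intro c hc hcm
    have hordc : orderOf (x ^ c) = m / c := by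
      rw [orderOf_pow, ← hm, Nat.gcd_eq_right hc]
    have hlt : Subgroup.zpowers (x ^ c) < H := by
      refine lt_of_le_of_ne (Subgroup.zpowers_le.mpr (pow_mem hxH c)) ?_
      intro heq
      have hcc : Nat.card (Subgroup.zpowers (x ^ c)) = Nat.card H := by rw [heq]
      rw [Nat.card_zpowers, hordc, hcardH] at hcc
      rcases hc with ⟨d, hd⟩
      rcases Nat.eq_zero_or_pos c with h0 | hpos
      · subst h0; rw [zero_mul] at hd; exact hm0 hd
      · have hdm : m / c = d := by rw [hd]; exact Nat.mul_div_cancel_left d hpos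
        rw [hdm] at hcc
        rw [hcc] at hd
        rcases Nat.eq_zero_or_pos m with hm00 | hmpos
        · exact hm0 hm00
        · refine hcm ?_
          by_contra hcn
          have h2c : 2 ≤ c := by omega
          have : 2 * m ≤ c * m := Nat.mul_le_mul_right m h2c
          omega
    exact hsub _ hlt (Subgroup.mem_zpowers _)
  have hpow2 : m = 2 ^ (m.factorization 2) := by
    set a := 2 ^ (m.factorization 2) with ha
    set b := m / 2 ^ (m.factorization 2) with hb
    have hab : a * b = m := Nat.ordProj_mul_ordCompl_eq_self m 2
    have hb1 : b = 1 := by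
      by_contra hbne
      have ha1 : 1 < a := by
        have h1 : 0 < m.factorization 2 :=
          Nat.Prime.factorization_pos_of_dvd Nat.prime_two hm0 h2m
        calc 1 < 2 ^ 1 := by norm_num
        _ ≤ a := Nat.pow_le_pow_right (by norm_num) h1
      have hxa : x ^ a ∈ N := hpowN a ⟨b, hab.symm⟩ (by omega)
      have hxb : x ^ b ∈ N := hpowN b ⟨a, by rw [mul_comm]; exact hab.symm⟩ hbne
      -- Bezout
      have hcop : Nat.Coprime a b := by
        apply Nat.Coprime.pow_left
        exact Nat.coprime_ordCompl Nat.prime_two hm0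
      have hic : IsCoprime (a : ℤ) (b : ℤ) := Nat.isCoprime_iff_coprime.mpr hcop
      obtain ⟨u, v, huv⟩ := hic
      have hxuv : x = (x ^ a) ^ u * (x ^ b) ^ v := by
        have h2 : x ^ (u * (a : ℤ) + v * (b : ℤ)) = (x ^ a) ^ u * (x ^ b) ^ v := by
          rw [zpow_add, mul_comm u (a:ℤ), mul_comm v (b:ℤ), zpow_mul, zpow_mul,
            zpow_natCast, zpow_natCast]
        rw [← h2, huv, zpow_one]
      have hxmem : x ∈ N := by
        rw [hxuv]
        exact mul_mem (N.zpow_mem hxa u) (N.zpow_mem hxb v)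
      exact hxN hxmem
    rw [← hab, hb1, mul_one]
  set n := m.factorization 2 with hn
  have hn1 : 1 ≤ n := by
    rcases Nat.eq_zero_or_pos n with h0 | h; · rw [h0, pow_zero] at hpow2; omega
    · exact h
  have hcardH2 : Nat.card H = 2 ^ n := by rw [hcardH]; exact hpow2
  have hcardG : Nat.card G = 3 * 2 ^ n := by
    have hmi := Subgroup.card_mul_index H
    rw [hcardH2, hidx3] at hmi
    omega
  -- Step F: the normal core is the center
  have hZle : Subgroup.center G ≤ H.normalCore := by
    have h1 : Subgroup.center G ≤ H := hnorm_eq ▸ Subgroup.center_le_normalizer _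
    exact Subgroup.normal_le_normalCore.mpr h1
  have hcore_center : H.normalCore = Subgroup.center G := by
    refine le_antisymm ?_ hZle
    set C := Subgroup.centralizer (H.normalCore : Set G) with hC
    have hHC : H ≤ C := by
      intro h hh
      rw [hC, Subgroup.mem_centralizer_iff]
      intro z hz
      have hzH : z ∈ H := hcore_le hz
      rw [hHx] at hh hzH
      obtain ⟨i, hi⟩ := hh
      obtain ⟨j, hj⟩ := hzH
      rw [← hi, ← hj, ← zpow_add, ← zpow_add, add_comm]
    have hCnormal : C.Normal := by
      constructor
      intro c hc g
      rw [hC, Subgroup.mem_centralizer_iff] at hc ⊢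
      intro z hz
      have hz' : g⁻¹ * z * g ∈ H.normalCore := by
        have := H.normalCore_normal.conj_mem z hz g⁻¹
        rwa [inv_inv] at this
      have hzc := hc _ hz'
      have := congrArg (fun w => g * w * g⁻¹) hzc
      simp only [mul_assoc, inv_mul_cancel_left, mul_inv_cancel_left] at this ⊢
      simpa [mul_assoc] using this
    have hCtop : C = ⊤ := by
      rcases hHC.lt_or_eq with hlt | he
      · exact hHmax.2 _ hlt
      · exact absurd (he ▸ hCnormal) hHnn
    intro z hz
    rw [Subgroup.mem_center_iff]
    intro g
    have hg : g ∈ C := hCtop.symm ▸ Subgroup.mem_top g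
    exact (Subgroup.mem_centralizer_iff.mp hg z hz).symm
  -- Step G: x ^ 2 is central
  have hx2 : x ^ 2 ∈ Subgroup.center G := by
    rw [← hcore_center]
    set f := QuotientGroup.mk' H.normalCore with hf
    have hcardQ6 : Nat.card (G ⧸ H.normalCore) = 6 := hidx_core
    have hdvd1 : orderOf (f x) ∣ 2 ^ n := by
      have := orderOf_map_dvd f x
      rwa [← hm, hpow2] at this
    have hdvd2 : orderOf (f x) ∣ 6 := hcardQ6 ▸ orderOf_dvd_natCard (f x)
    have hdvd : orderOf (f x) ∣ 2 := by
      obtain ⟨j, hj, hje⟩ := (Nat.dvd_prime_pow Nat.prime_two).mp hdvd1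
      have hj1 : j ≤ 1 := by
        by_contra hj2
        have h4 : (4 : ℕ) ∣ 6 := by
          calc (4:ℕ) = 2 ^ 2 := by norm_num
          _ ∣ 2 ^ j := pow_dvd_pow 2 (by omega)
          _ ∣ 6 := hje ▸ hdvd2
        norm_num at h4
      rw [hje]
      calc (2:ℕ) ^ j ∣ 2 ^ 1 := pow_dvd_pow 2 hj1
      _ = 2 := by norm_num
    have hfx2 : f (x ^ 2) = 1 := by
      rw [map_pow]
      exact orderOf_dvd_iff_pow_eq_one.mp hdvd
    have : x ^ 2 ∈ f.ker := MonoidHom.mem_ker.mpr hfx2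
    rwa [hf, QuotientGroup.ker_mk'] at this
  -- Step H: an element y of order 3
  haveI : Fact (Nat.Prime 3) := ⟨by norm_num⟩
  obtain ⟨y, hy3⟩ : ∃ y : G, orderOf y = 3 :=
    exists_prime_orderOf_dvd_card' 3 (by rw [hcardG]; exact dvd_mul_right 3 _)
  have hyH : y ∉ H := by
    intro hy
    have h1 : orderOf (⟨y, hy⟩ : H) = 3 := by rw [Subgroup.orderOf_mk, hy3]
    have h2 : orderOf (⟨y, hy⟩ : H) ∣ 2 ^ n := hcardH2 ▸ orderOf_dvd_natCard _
    rw [h1] at h2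
    have := Nat.Prime.dvd_of_dvd_pow (p := 3) (by norm_num) h2
    norm_num at this
  have hclose : Subgroup.closure {x, y} = ⊤ := by
    have hle : H ≤ Subgroup.closure {x, y} := by
      rw [hHx]
      exact Subgroup.zpowers_le.mpr (Subgroup.subset_closure (by simp))
    rcases hle.lt_or_eq with hlt | he
    · exact hHmax.2 _ hlt
    · exact absurd (he ▸ Subgroup.subset_closure (show y ∈ ({x, y} : Set G) by simp)) hyH
  -- Step I: the subgroup generated by y is normal
  obtain ⟨p, hp⟩ : ∃ p, n = p + 1 := ⟨n - 1, by omega⟩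
  have hidxZ : (Subgroup.center G).index = 6 := by rw [← hcore_center]; exact hidx_core
  have hcardZ : Nat.card (Subgroup.center G) * 6 = Nat.card G := by
    have h := Subgroup.card_mul_index (Subgroup.center G)
    rwa [hidxZ] at h
  have hcardZ' : Nat.card (Subgroup.center G) = 2 ^ p := by
    have h6 : (6 : ℕ) * 2 ^ p = 3 * 2 ^ n := by rw [hp, pow_succ]; ring
    rw [hcardG] at hcardZ
    omega
  set Q := Subgroup.zpowers y with hQ
  have hcardQ3 : Nat.card Q = 3 := by rw [hQ, Nat.card_zpowers, hy3]
  have h3d : 3 ∣ Nat.card (Subgroup.normalizer (Q : Set G)) :=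
    hcardQ3 ▸ Subgroup.card_dvd_of_le Subgroup.le_normalizer
  have h2d : 2 ^ p ∣ Nat.card (Subgroup.normalizer (Q : Set G)) :=
    hcardZ' ▸ Subgroup.card_dvd_of_le (Subgroup.center_le_normalizer _)
  have hcop : Nat.Coprime 3 (2 ^ p) := by
    apply Nat.Coprime.pow_right
    norm_num
  have hmul : 3 * 2 ^ p ∣ Nat.card (Subgroup.normalizer (Q : Set G)) :=
    Nat.Coprime.mul_dvd_of_dvd_of_dvd hcop h3d h2d
  have hidxNq : (Subgroup.normalizer (Q : Set G)).index ∣ 2 := by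
    obtain ⟨t, ht⟩ := hmul
    have hQi := Subgroup.card_mul_index (Subgroup.normalizer (Q : Set G))
    rw [ht, hcardG] at hQi
    have h6 : (3 : ℕ) * 2 ^ n = 3 * 2 ^ p * 2 := by rw [hp, pow_succ]; ring
    rw [h6] at hQi
    have hpos : 0 < 3 * 2 ^ p := by positivity
    have htI : t * (Subgroup.normalizer (Q : Set G)).index = 2 := by
      apply Nat.eq_of_mul_eq_mul_left hpos
      rw [← mul_assoc]
      exact hQi
    exact Dvd.intro_left t htI
  have hQnormal : Q.Normal := by
    have hfact3 : (Nat.card G).factorization 3 = 1 := by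
      rw [hcardG]
      rw [Nat.factorization_mul (by norm_num) (by positivity), Nat.factorization_pow,
        Nat.Prime.factorization Nat.prime_two,
        Nat.Prime.factorization (by norm_num : Nat.Prime 3)]
      simp
    let PS : Sylow 3 G := Sylow.ofCard Q (by rw [hcardQ3, hfact3, pow_one])
    have hPSQ : (PS : Subgroup G) = Q := Sylow.coe_ofCard _ _
    have hcount : Nat.card (Sylow 3 G) ≡ 1 [MOD 3] := card_sylow_modEq_one 3 G
    have hceq : Nat.card (Sylow 3 G) = (Subgroup.normalizer (Q : Set G)).index := by
      rw [Sylow.card_eq_index_normalizer PS]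
      exact congrArg (fun K : Subgroup G => (Subgroup.normalizer (K : Set G)).index) hPSQ
    rw [hceq] at hcount
    have hone : (Subgroup.normalizer (Q : Set G)).index = 1 := by
      have hub : (Subgroup.normalizer (Q : Set G)).index ≤ 2 := Nat.le_of_dvd (by norm_num) hidxNq
      have hne : (Subgroup.normalizer (Q : Set G)).index ≠ 0 := Subgroup.index_ne_zero_of_finite
      rcases Nat.lt_or_ge (Subgroup.normalizer (Q : Set G)).index 2 with h | h
      · omega
      · exfalso
        have h2 : (Subgroup.normalizer (Q : Set G)).index = 2 := by omega
        rw [h2] at hcount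
        exact absurd hcount (by decide)
    exact Subgroup.normalizer_eq_top_iff.mp (Subgroup.index_eq_one.mp hone)
  -- Step J: the conjugation relation
  have hconj : x⁻¹ * y * x = y⁻¹ := by
    have hmem : x⁻¹ * y * x ∈ Q := by
      have := hQnormal.conj_mem y (Subgroup.mem_zpowers y) x⁻¹
      rwa [inv_inv] at this
    rw [hQ, Subgroup.mem_zpowers_iff] at hmem
    obtain ⟨k, hk⟩ := hmem
    have hy3n : y ^ (3 : ℕ) = 1 := by rw [← hy3]; exact pow_orderOf_eq_one y
    have hy3' : y ^ (3 : ℤ) = 1 := by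
      rw [show ((3:ℤ)) = ((3:ℕ):ℤ) by norm_num, zpow_natCast, hy3n]
    have hk3 : y ^ (k % 3) = x⁻¹ * y * x := by
      rw [← hk]
      have hkd : k = 3 * (k / 3) + k % 3 := by omega
      conv_rhs => rw [hkd]
      rw [zpow_add, zpow_mul, hy3', one_zpow, one_mul]
    have hr : k % 3 = 0 ∨ k % 3 = 1 ∨ k % 3 = 2 := by omega
    rcases hr with h0 | h1 | h2
    · exfalso
      rw [h0, zpow_zero] at hk3
      have hyone : y = 1 := by
        have := congrArg (fun w => x * w * x⁻¹) hk3
        simp only [mul_assoc] at this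
        simpa [mul_assoc] using this.symm
      rw [hyone, orderOf_one] at hy3
      norm_num at hy3
    · exfalso
      rw [h1, zpow_one] at hk3
      have hcomm : x * y = y * x := by
        have := congrArg (fun w => x * w) hk3
        simp only [← mul_assoc, mul_inv_cancel, one_mul] at this
        rw [← this]
      have hcyxi : ∀ i : ℤ, y * x ^ i = x ^ i * y := fun i =>
        ((show Commute x y from hcomm).symm.zpow_right i).eq
      have key : ∀ i : ℤ, y * x ^ i * y⁻¹ = x ^ i := fun i => by
        rw [hcyxi i, mul_assoc, mul_inv_cancel, mul_one]
      have keyinv : ∀ i : ℤ, y⁻¹ * x ^ i * y = x ^ i := fun i => by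
        have hci : y⁻¹ * x ^ i = x ^ i * y⁻¹ :=
          ((show Commute x y from hcomm).symm.zpow_right i).inv_left.eq
        rw [hci, mul_assoc, inv_mul_cancel, mul_one]
      apply hyH
      rw [← hnorm_eq]
      rw [Subgroup.mem_normalizer_iff]
      intro h
      constructor
      · intro hh
        rw [hHx] at hh ⊢
        rw [Subgroup.mem_zpowers_iff] at hh ⊢
        obtain ⟨i, hi⟩ := hh
        exact ⟨i, by rw [← hi]; exact (key i).symm⟩
      · intro hh
        rw [hHx] at hh ⊢
        rw [Subgroup.mem_zpowers_iff] at hh ⊢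
        obtain ⟨i, hi⟩ := hh
        refine ⟨i, ?_⟩
        rw [← keyinv i, hi]
        group
    · rw [h2] at hk3
      rw [← hk3]
      have hz2 : y ^ (2:ℤ) = y ^ (2:ℕ) := by
        rw [show ((2:ℤ)) = ((2:ℕ):ℤ) by norm_num, zpow_natCast]
      rw [hz2]
      have hmm : y ^ (2:ℕ) * y = 1 := by rw [← pow_succ]; exact hy3n
      exact eq_inv_of_mul_eq_one_left hmm
  -- Step K: x ^ 2 commutes with y
  have hrelc : y⁻¹ * x ^ 2 * y = x ^ 2 := by
    have hcen := Subgroup.mem_center_iff.mp hx2 y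
    calc y⁻¹ * x ^ 2 * y = y⁻¹ * (x ^ 2 * y) := by rw [mul_assoc]
    _ = y⁻¹ * (y * x ^ 2) := by rw [← hcen]
    _ = x ^ 2 := by rw [← mul_assoc, inv_mul_cancel, one_mul]
  exact ⟨hidx3, hcyc, ⟨n, hcardH2⟩, hcore_center, n, x, y, hclose, hpow2, hy3, hconj,
    hrelc, hcardG⟩
end
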